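/- arXiv:1809.04859 — 4 statements merged into one kernel-verified Lean document; each statement's English description precedes it below -/
import Mathlib

section
/- Assume that for all Borel probability measures μ₀, μ₁ on X with finite second moment and with μ₀ absolutely continuous with respect to m, every coupling π of (μ₀,μ₁) minimizing ∫ d(x,y)² π(dx dy) among all couplings of (μ₀,μ₁) is concentrated on the graph of a Borel map. Then the set of transport rays R is an equivalence relation on the transport set 𝒯, and m(𝒯_e \ 𝒯) = 0. -/
open Set MeasureTheory

variable {X : Type*}

/-- A geodesic parametrized on `[0,1]`. -/
def IsGeodesic [MetricSpace X] (γ : ℝ → X) : Prop :=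
  ∀ s ∈ Set.Icc (0:ℝ) 1, ∀ t ∈ Set.Icc (0:ℝ) 1,
    dist (γ s) (γ t) = |s - t| * dist (γ 0) (γ 1)

/-- `(X,d)` is a geodesic space. -/
def GeodesicSpace (X : Type*) [MetricSpace X] : Prop :=
  ∀ x y : X, ∃ γ : ℝ → X, IsGeodesic γ ∧ γ 0 = x ∧ γ 1 = y

/-- `Γ = {(x,y) : φ(x) - φ(y) = d(x,y)}`. -/
def Gamma [MetricSpace X] (φ : X → ℝ) : Set (X × X) :=
  {p | φ p.1 - φ p.2 = dist p.1 p.2}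

/-- `Γ⁻¹`. -/
def GammaInv [MetricSpace X] (φ : X → ℝ) : Set (X × X) :=
  {p | (p.2, p.1) ∈ Gamma φ}

/-- The set of transport rays `R = Γ ∪ Γ⁻¹`. -/
def Rays [MetricSpace X] (φ : X → ℝ) : Set (X × X) :=
  Gamma φ ∪ GammaInv φ

/-- `Γ(x)`. -/
def GammaOf [MetricSpace X] (φ : X → ℝ) (x : X) : Set X := {y | (x, y) ∈ Gamma φ}

/-- `Γ⁻¹(x)`. -/
def GammaInvOf [MetricSpace X] (φ : X → ℝ) (x : X) : Set X := {y | (x, y) ∈ GammaInv φ}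

/-- `R(x) = Γ(x) ∪ Γ⁻¹(x)`. -/
def RayOf [MetricSpace X] (φ : X → ℝ) (x : X) : Set X := GammaOf φ x ∪ GammaInvOf φ x

/-- The transport set with end points `𝒯_e`. -/
def Te [MetricSpace X] (φ : X → ℝ) : Set X :=
  (Prod.fst '' (Gamma φ \ {p : X × X | p.1 = p.2})) ∪
    (Prod.fst '' (GammaInv φ \ {p : X × X | p.1 = p.2}))

/-- The set of forward branching points `A₊`. -/
def Aplus [MetricSpace X] (φ : X → ℝ) : Set X :=
  {x | x ∈ Te φ ∧ ∃ z ∈ GammaOf φ x, ∃ w ∈ GammaOf φ x, (z, w) ∉ Rays φ}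

/-- The set of backward branching points `A₋`. -/
def Aminus [MetricSpace X] (φ : X → ℝ) : Set X :=
  {x | x ∈ Te φ ∧ ∃ z ∈ GammaInvOf φ x, ∃ w ∈ GammaInvOf φ x, (z, w) ∉ Rays φ}

/-- The transport set `𝒯 = 𝒯_e \ (A₊ ∪ A₋)`. -/
def Tset [MetricSpace X] (φ : X → ℝ) : Set X := Te φ \ (Aplus φ ∪ Aminus φ)

open Metric Filter

section Basic
variable [MetricSpace X] {ψ : X → ℝ}

lemma gamma_refl (ψ : X → ℝ) (x : X) : (x, x) ∈ Gamma ψ := by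
  simp [Gamma]

lemma lip_diff_le (hψ : LipschitzWith 1 ψ) (x y : X) : ψ x - ψ y ≤ dist x y := by
  have h := hψ.dist_le_mul x y
  rw [Real.dist_eq, NNReal.coe_one, one_mul] at h
  have := (abs_le.1 h).2
  linarith

lemma gamma_trans (hψ : LipschitzWith 1 ψ) {x y z : X}
    (h1 : (x, y) ∈ Gamma ψ) (h2 : (y, z) ∈ Gamma ψ) : (x, z) ∈ Gamma ψ := by
  simp only [Gamma, mem_setOf_eq] at *
  have hle : ψ x - ψ z ≤ dist x z := lip_diff_le hψ x z
  have : dist x z ≤ dist x y + dist y z := dist_triangle x y z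
  have : dist x z ≤ ψ x - ψ z := by linarith
  linarith

lemma rays_symm {x y : X} (h : (x, y) ∈ Rays ψ) : (y, x) ∈ Rays ψ := by
  rcases h with h | h
  · exact Or.inr h
  · exact Or.inl h

end Basic


section Proj
variable [MetricSpace X]

lemma isClosed_proj {G : Set (X × X)} (hG : IsClosed G) {K : Set X} (hK : IsCompact K)
    (hsub : ∀ p ∈ G, p.2 ∈ K) : IsClosed (Prod.fst '' G) := by
  refine IsSeqClosed.isClosed ?_
  intro xs x hmem hx
  have hex : ∀ n, ∃ z, (xs n, z) ∈ G := by
    intro n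
    rcases hmem n with ⟨p, hp, hp1⟩
    exact ⟨p.2, by rw [← hp1]; exact hp⟩
  choose z hz using hex
  obtain ⟨w, hwK, θ, hθ, hw⟩ := hK.tendsto_subseq (fun n => hsub _ (hz n))
  have h1 : Tendsto (fun n => (xs (θ n), z (θ n))) atTop (nhds (x, w)) :=
    (hx.comp hθ.tendsto_atTop).prodMk_nhds hw
  have hmemG : (x, w) ∈ G :=
    hG.mem_of_tendsto h1 (Filter.Eventually.of_forall fun n => hz (θ n))
  exact ⟨(x, w), hmemG, rfl⟩

end Proj

open Classical in
noncomputable def selS [MetricSpace X] (G : Set (X × X)) (u : ℕ → X) : ℕ → X → Set X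
  | 0, x => {z | (x, z) ∈ G}
  | n+1, x => selS G u n x ∩ closedBall
      (u (if h : ∃ i, (selS G u n x ∩ closedBall (u i) ((1/2:ℝ)^n)).Nonempty
          then Nat.find h else 0)) ((1/2:ℝ)^n)

open Classical in
noncomputable def selIdx [MetricSpace X] (G : Set (X × X)) (u : ℕ → X) (n : ℕ) (x : X) : ℕ :=
  if h : ∃ i, (selS G u n x ∩ closedBall (u i) ((1/2:ℝ)^n)).Nonempty
  then Nat.find h else 0

lemma selS_succ [MetricSpace X] (G : Set (X × X)) (u : ℕ → X) (n : ℕ) (x : X) :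
    selS G u (n+1) x = selS G u n x ∩ closedBall (u (selIdx G u n x)) ((1/2:ℝ)^n) := rfl

lemma exists_borel_selection [MetricSpace X] [ProperSpace X] [MeasurableSpace X] [BorelSpace X]
    {G : Set (X × X)} (hG : IsClosed G) (a : X) {r : ℝ}
    (hsub : ∀ p ∈ G, p.2 ∈ closedBall a r) :
    ∃ T : X → X, Measurable T ∧ ∀ x, (∃ z, (x, z) ∈ G) → (x, T x) ∈ G := by
  classical
  haveI : Nonempty X := ⟨a⟩
  have hK : IsCompact (closedBall a r) := isCompact_closedBall a r
  set u : ℕ → X := TopologicalSpace.denseSeq X with hu_def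
  have hu : DenseRange u := TopologicalSpace.denseRange_denseSeq X
  set F : X → Set X := fun x => {z | (x, z) ∈ G} with hF
  have hS0 : ∀ x, selS G u 0 x = F x := fun _ => rfl
  have hFclosed : ∀ x, IsClosed (F x) := fun x => hG.preimage (Continuous.prodMk_right x)
  have hSclosed : ∀ n x, IsClosed (selS G u n x) := by
    intro n
    induction n with
    | zero => exact hFclosed
    | succ n ih =>
      intro x
      rw [selS_succ]
      exact (ih x).inter isClosed_closedBall
  have hSsub : ∀ n x, selS G u n x ⊆ F x := by
    intro n
    induction n with
    | zero => intro x; exact subset_rfl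
    | succ n ih =>
      intro x
      rw [selS_succ]
      exact inter_subset_left.trans (ih x)
  have hSK : ∀ n x, selS G u n x ⊆ closedBall a r := fun n x =>
    (hSsub n x).trans (fun z hz => hsub _ hz)
  have hScompact : ∀ n x, IsCompact (selS G u n x) := fun n x =>
    hK.of_isClosed_subset (hSclosed n x) (hSK n x)
  have hSmono : ∀ n x, selS G u (n+1) x ⊆ selS G u n x := by
    intro n x; rw [selS_succ]; exact inter_subset_left
  have hfind : ∀ n x, (selS G u n x).Nonempty →
      ∃ i, (selS G u n x ∩ closedBall (u i) ((1/2:ℝ)^n)).Nonempty := by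
    rintro n x ⟨z, hz⟩
    obtain ⟨i, hi⟩ := hu.exists_dist_lt z (by positivity : (0:ℝ) < (1/2)^n)
    exact ⟨i, z, hz, mem_closedBall.2 hi.le⟩
  have hSne : ∀ x, (F x).Nonempty → ∀ n, (selS G u n x).Nonempty := by
    intro x hx n
    induction n with
    | zero => exact hx
    | succ n ih =>
      have h := hfind n x ih
      rw [selS_succ, selIdx, dif_pos h]
      exact Nat.find_spec h
  have hball : ∀ n x, selS G u (n+1) x ⊆ closedBall (u (selIdx G u n x)) ((1/2:ℝ)^n) := by
    intro n x; rw [selS_succ]; exact inter_subset_right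
  have hInter : ∀ x, (F x).Nonempty → (⋂ n, selS G u n x).Nonempty := fun x hx =>
    IsCompact.nonempty_iInter_of_sequence_nonempty_isCompact_isClosed _
      (fun n => hSmono n x) (hSne x hx) (hScompact 0 x) (fun n => hSclosed n x)
  set T : X → X := fun x => if h : (⋂ n, selS G u n x).Nonempty then h.choose else a with hT
  have hTmem : ∀ x, (F x).Nonempty → T x ∈ ⋂ n, selS G u n x := by
    intro x hx
    have h := hInter x hx
    simp only [hT, dif_pos h]
    exact h.choose_spec
  set C : Set X := Prod.fst '' G with hC
  have hCiff : ∀ x, x ∈ C ↔ (F x).Nonempty := by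
    intro x
    constructor
    · rintro ⟨p, hp, hp1⟩; exact ⟨p.2, by rw [hF]; simp only [mem_setOf_eq]; rw [← hp1]; exact hp⟩
    · rintro ⟨z, hz⟩; exact ⟨(x, z), hz, rfl⟩
  have hCclosed : IsClosed C := isClosed_proj hG hK hsub
  -- off C, selS is empty and selIdx = 0
  have hSoffC : ∀ x, x ∉ C → ∀ n, selS G u n x = ∅ := by
    intro x hx n
    have hFx : F x = ∅ := by
      rw [eq_empty_iff_forall_notMem]
      intro z hz
      exact hx ((hCiff x).2 ⟨z, hz⟩)
    exact eq_empty_of_subset_empty (by rw [← hFx]; exact hSsub n x)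
  have hIdxoffC : ∀ x, x ∉ C → ∀ n, selIdx G u n x = 0 := by
    intro x hx n
    rw [selIdx, dif_neg]
    rintro ⟨i, z, hz, -⟩
    rw [hSoffC x hx n] at hz
    exact hz
  -- the "projection" measurable sets
  have hPr : ∀ B : Set X, IsClosed B →
      IsClosed (Prod.fst '' (G ∩ (univ ×ˢ B))) := by
    intro B hB
    exact isClosed_proj (hG.inter (isClosed_univ.prod hB)) hK
      (fun p hp => hsub p hp.1)
  have hPrmem : ∀ (B : Set X) (x : X),
      x ∈ Prod.fst '' (G ∩ (univ ×ˢ B)) ↔ (F x ∩ B).Nonempty := by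
    intro B x
    constructor
    · rintro ⟨p, ⟨hpG, -, hpB⟩, hp1⟩
      exact ⟨p.2, by rw [hF]; simp only [mem_setOf_eq]; rw [← hp1]; exact hpG, hpB⟩
    · rintro ⟨z, hzF, hzB⟩
      exact ⟨(x, z), ⟨hzF, trivial, hzB⟩, rfl⟩
  -- fixed-history sets
  set D : ℕ → (ℕ → ℕ) → Set X := fun n c => ⋂ k ∈ Finset.range n, closedBall (u (c k)) ((1/2:ℝ)^k)
    with hD
  have hDclosed : ∀ n c, IsClosed (D n c) := fun n c =>
    isClosed_biInter (fun k _ => isClosed_closedBall)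
  have hshape : ∀ (n : ℕ) (c : ℕ → ℕ) (x : X), (∀ k < n, selIdx G u k x = c k) →
      selS G u n x = F x ∩ D n c := by
    intro n
    induction n with
    | zero => intro c x _; simp [hD, hS0]
    | succ n ih =>
      intro c x hc
      rw [selS_succ, ih c x (fun k hk => hc k (Nat.lt_succ_of_lt hk)),
        hc n (Nat.lt_succ_self n)]
      simp only [hD, Finset.range_add_one, Finset.set_biInter_insert]
      rw [inter_comm (closedBall (u (c n)) _), inter_assoc]
  -- key step: level sets of selIdx relative to a fixed history
  have key : ∀ (n : ℕ) (c : ℕ → ℕ) (j : ℕ),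
      ∃ V : Set X, MeasurableSet V ∧
        {x | ∀ k < n, selIdx G u k x = c k} ∩ {x | selIdx G u n x = j}
          = {x | ∀ k < n, selIdx G u k x = c k} ∩ V := by
    intro n c j
    set B : ℕ → Set X := fun i => D n c ∩ closedBall (u i) ((1/2:ℝ)^n) with hB
    have hBclosed : ∀ i, IsClosed (B i) := fun i => (hDclosed n c).inter isClosed_closedBall
    set P : ℕ → Set X := fun i => Prod.fst '' (G ∩ (univ ×ˢ B i)) with hP
    have hPmeas : ∀ i, MeasurableSet (P i) := fun i => (hPr (B i) (hBclosed i)).measurableSet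
    have hQ : ∀ x, (∀ k < n, selIdx G u k x = c k) → ∀ i,
        ((selS G u n x ∩ closedBall (u i) ((1/2:ℝ)^n)).Nonempty ↔ x ∈ P i) := by
      intro x hx i
      rw [hshape n c x hx, hP]
      simp only
      rw [hPrmem, hB]
      simp only
      rw [inter_assoc]
    refine ⟨(P j ∩ ⋂ i, ⋂ (_ : i < j), (P i)ᶜ) ∪ ⋃ (_ : j = 0), ⋂ i, (P i)ᶜ, ?_, ?_⟩
    · exact ((hPmeas j).inter (MeasurableSet.iInter fun i =>
        MeasurableSet.iInter fun _ => (hPmeas i).compl)).union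
        (MeasurableSet.iUnion fun _ => MeasurableSet.iInter fun i => (hPmeas i).compl)
    · ext x
      simp only [mem_inter_iff, mem_setOf_eq, mem_union, mem_iInter, mem_iUnion, mem_compl_iff]
      refine and_congr_right fun hx => ?_
      rw [selIdx]
      split_ifs with h
      · rw [Nat.find_eq_iff h]
        constructor
        · rintro ⟨h1, h2⟩
          exact Or.inl ⟨(hQ x hx j).1 h1, fun i hij => fun hPi => h2 i hij ((hQ x hx i).2 hPi)⟩
        · rintro (⟨h1, h2⟩ | ⟨hj0, hall⟩)
          · exact ⟨(hQ x hx j).2 h1, fun i hij hQi => h2 i hij ((hQ x hx i).1 hQi)⟩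
          · obtain ⟨i0, hi0⟩ := h
            exact absurd ((hQ x hx i0).1 hi0) (hall i0)
      · have hnP : ∀ i, x ∉ P i := fun i hPi => h ⟨i, (hQ x hx i).2 hPi⟩
        constructor
        · intro h0
          exact Or.inr ⟨h0.symm, hnP⟩
        · rintro (⟨h1, -⟩ | ⟨hj0, -⟩)
          · exact absurd h1 (hnP j)
          · exact hj0.symm
  -- measurability of history sets
  have hmeas : ∀ (n : ℕ) (c : ℕ → ℕ),
      MeasurableSet {x | ∀ k < n, selIdx G u k x = c k} := by
    intro n
    induction n with
    | zero =>
      intro c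
      simp only [Nat.not_lt_zero, false_implies, implies_true, setOf_true]
      exact MeasurableSet.univ
    | succ n ih =>
      intro c
      have hsplit : {x : X | ∀ k < n + 1, selIdx G u k x = c k}
          = {x | ∀ k < n, selIdx G u k x = c k} ∩ {x | selIdx G u n x = c n} := by
        ext x
        simp only [mem_inter_iff, mem_setOf_eq]
        constructor
        · intro hx
          exact ⟨fun k hk => hx k (Nat.lt_succ_of_lt hk), hx n (Nat.lt_succ_self n)⟩
        · rintro ⟨h1, h2⟩ k hk
          rcases Nat.lt_succ_iff_lt_or_eq.1 hk with hk' | hk'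
          · exact h1 k hk'
          · subst hk'; exact h2
      obtain ⟨V, hV, hEq⟩ := key n c (c n)
      rw [hsplit, hEq]
      exact (ih c).inter hV
  -- measurability of selIdx
  have hIdxMeas : ∀ n, Measurable (selIdx G u n) := by
    intro n
    refine measurable_to_countable' fun j => ?_
    have hcover : selIdx G u n ⁻¹' {j}
        = ⋃ c' : Fin n → ℕ,
            ({x | ∀ k < n, selIdx G u k x = (fun k => if h : k < n then c' ⟨k, h⟩ else 0) k}
              ∩ {x | selIdx G u n x = j}) := by
      ext x
      simp only [mem_preimage, mem_singleton_iff, mem_iUnion, mem_inter_iff, mem_setOf_eq]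
      constructor
      · intro hx
        refine ⟨fun k => selIdx G u k.1 x, fun k hk => ?_, hx⟩
        rw [dif_pos hk]
      · rintro ⟨c', -, hx⟩
        exact hx
    rw [hcover]
    refine MeasurableSet.iUnion fun c' => ?_
    obtain ⟨V, hV, hEq⟩ := key n _ j
    rw [hEq]
    exact (hmeas n _).inter hV
  -- the approximating sequence
  set v : ℕ → X → X := fun n => C.piecewise (fun x => u (selIdx G u n x)) (fun _ => a) with hv
  have hvmeas : ∀ n, Measurable (v n) := fun n =>
    Measurable.piecewise hCclosed.measurableSet
      ((measurable_from_nat (f := u)).comp (hIdxMeas n)) measurable_const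
  set Tf : X → X := C.piecewise T (fun _ => a) with hTf
  have hconv : ∀ x, Filter.Tendsto (fun n => v n x) atTop (nhds (Tf x)) := by
    intro x
    by_cases hx : x ∈ C
    · have hFx : (F x).Nonempty := (hCiff x).1 hx
      have hTx := hTmem x hFx
      have hdist : ∀ n, dist (v n x) (Tf x) ≤ (1/2:ℝ)^n := by
        intro n
        rw [hv, hTf]
        simp only [Set.piecewise_eq_of_mem _ _ _ hx]
        have hT1 : T x ∈ selS G u (n+1) x := by
          have := mem_iInter.1 hTx (n+1)
          exact this
        have := hball n x hT1
        rw [mem_closedBall] at this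
        rw [dist_comm]
        exact this
      refine tendsto_iff_dist_tendsto_zero.2 ?_
      refine squeeze_zero (fun n => dist_nonneg) hdist ?_
      exact tendsto_pow_atTop_nhds_zero_of_lt_one (by norm_num) (by norm_num)
    · rw [hv, hTf]
      simp only [Set.piecewise_eq_of_notMem _ _ _ hx]
      exact tendsto_const_nhds
  refine ⟨Tf, measurable_of_tendsto_metrizable hvmeas (tendsto_pi_nhds.2 hconv), ?_⟩
  rintro x ⟨z, hz⟩
  have hx : x ∈ C := ⟨(x, z), hz, rfl⟩
  have hFx : (F x).Nonempty := (hCiff x).1 hx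
  have : Tf x ∈ F x := by
    have h0 := mem_iInter.1 (hTmem x hFx) 0
    rw [hS0] at h0
    rw [hTf]
    simpa only [Set.piecewise_eq_of_mem _ _ _ hx] using h0
  exact this

section Null
open scoped ENNReal
variable [MetricSpace X]

def GSet (ψ : X → ℝ) (c : ℝ) (a : X) (r : ℝ) : Set (X × X) :=
  {p | p ∈ Gamma ψ ∧ ψ p.2 = c ∧ p.2 ∈ closedBall a r}

def BadSet (ψ : X → ℝ) (c : ℝ) (a b : X) (r : ℝ) : Set X :=
  Prod.fst '' GSet ψ c a r ∩ Prod.fst '' GSet ψ c b r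

lemma isClosed_gamma {ψ : X → ℝ} (hψ : Continuous ψ) : IsClosed (Gamma ψ) :=
  isClosed_eq ((hψ.comp continuous_fst).sub (hψ.comp continuous_snd)) continuous_dist

lemma isClosed_gset {ψ : X → ℝ} (hψ : Continuous ψ) (c : ℝ) (a : X) (r : ℝ) :
    IsClosed (GSet ψ c a r) := by
  have h1 : IsClosed {p : X × X | ψ p.2 = c} :=
    isClosed_eq (hψ.comp continuous_snd) continuous_const
  have h2 : IsClosed {p : X × X | p.2 ∈ closedBall a r} :=
    (isClosed_closedBall).preimage continuous_snd
  exact (isClosed_gamma hψ).inter (h1.inter h2)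

lemma badset_null [ProperSpace X] [MeasurableSpace X] [BorelSpace X]
    (m : Measure X) [IsProbabilityMeasure m] {ψ : X → ℝ} (hψ : LipschitzWith 1 ψ)
    (H : ∀ μ₀ μ₁ : Measure X, IsProbabilityMeasure μ₀ → IsProbabilityMeasure μ₁ →
      (∃ x₀ : X, ∫⁻ x, ENNReal.ofReal (dist x x₀ ^ 2) ∂μ₀ < ⊤) →
      (∃ x₀ : X, ∫⁻ x, ENNReal.ofReal (dist x x₀ ^ 2) ∂μ₁ < ⊤) →
      μ₀ ≪ m →
      ∀ π : Measure (X × X), IsProbabilityMeasure π →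
        π.map Prod.fst = μ₀ → π.map Prod.snd = μ₁ →
        (∀ π' : Measure (X × X), IsProbabilityMeasure π' →
          π'.map Prod.fst = μ₀ → π'.map Prod.snd = μ₁ →
          ∫⁻ p, ENNReal.ofReal (dist p.1 p.2 ^ 2) ∂π ≤
            ∫⁻ p, ENNReal.ofReal (dist p.1 p.2 ^ 2) ∂π') →
        ∃ T : X → X, Measurable T ∧ π {p : X × X | p.2 = T p.1} = 1)
    (c : ℝ) (a b : X) (r : ℝ) (hab : 2 * r < dist a b) :
    m (BadSet ψ c a b r) = 0 := by
  classical
  have hψc : Continuous ψ := hψ.continuous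
  have hψm : Measurable ψ := hψc.measurable
  have hGa : IsClosed (GSet ψ c a r) := isClosed_gset hψc c a r
  have hGb : IsClosed (GSet ψ c b r) := isClosed_gset hψc c b r
  have hsuba : ∀ p ∈ GSet ψ c a r, p.2 ∈ closedBall a r := fun p hp => hp.2.2
  have hsubb : ∀ p ∈ GSet ψ c b r, p.2 ∈ closedBall b r := fun p hp => hp.2.2
  obtain ⟨T₁, hT₁m, hT₁⟩ := exists_borel_selection hGa a hsuba
  obtain ⟨T₂, hT₂m, hT₂⟩ := exists_borel_selection hGb b hsubb
  have hBadClosed : IsClosed (BadSet ψ c a b r) :=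
    (isClosed_proj hGa (isCompact_closedBall a r) hsuba).inter
      (isClosed_proj hGb (isCompact_closedBall b r) hsubb)
  -- reduce to bounded pieces
  have hcover : BadSet ψ c a b r = ⋃ n : ℕ, BadSet ψ c a b r ∩ closedBall a n := by
    ext x
    simp only [mem_iUnion, mem_inter_iff]
    constructor
    · intro hx
      obtain ⟨n, hn⟩ := exists_nat_ge (dist x a)
      exact ⟨n, hx, mem_closedBall.2 hn⟩
    · rintro ⟨n, hn, -⟩; exact hn
  rw [hcover]
  refine measure_iUnion_null fun n => ?_
  by_contra hpos
  set E : Set X := BadSet ψ c a b r ∩ closedBall a n with hEdef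
  have hE : MeasurableSet E := (hBadClosed.inter isClosed_closedBall).measurableSet
  have hEtop : m E ≠ ⊤ := measure_ne_top m E
  -- properties of points of E
  have hT₁E : ∀ x ∈ E, (x, T₁ x) ∈ Gamma ψ ∧ ψ (T₁ x) = c ∧ T₁ x ∈ closedBall a r := by
    intro x hx
    obtain ⟨⟨⟨p, hp, hp1⟩, -⟩, -⟩ := hx
    exact hT₁ x ⟨p.2, by rw [← hp1]; exact hp⟩
  have hT₂E : ∀ x ∈ E, (x, T₂ x) ∈ Gamma ψ ∧ ψ (T₂ x) = c ∧ T₂ x ∈ closedBall b r := by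
    intro x hx
    obtain ⟨⟨-, ⟨p, hp, hp1⟩⟩, -⟩ := hx
    exact hT₂ x ⟨p.2, by rw [← hp1]; exact hp⟩
  have hd₁ : ∀ x ∈ E, dist x (T₁ x) = ψ x - c := by
    intro x hx
    obtain ⟨hg, hc, -⟩ := hT₁E x hx
    rw [← hg]  -- dist = ψ x - ψ (T₁ x)
    rw [hc]
  have hd₂ : ∀ x ∈ E, dist x (T₂ x) = ψ x - c := by
    intro x hx
    obtain ⟨hg, hc, -⟩ := hT₂E x hx
    rw [← hg, hc]
  -- the base measure
  set μ₀ : Measure X := (m E)⁻¹ • m.restrict E with hμ₀def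
  clear_value μ₀
  have hμ₀univ : μ₀ univ = 1 := by
    rw [hμ₀def, Measure.smul_apply, smul_eq_mul, Measure.restrict_apply_univ,
      ENNReal.inv_mul_cancel hpos hEtop]
  haveI hμ₀P : IsProbabilityMeasure μ₀ := ⟨hμ₀univ⟩
  have hμ₀Ec : μ₀ Eᶜ = 0 := by
    rw [hμ₀def, Measure.smul_apply, smul_eq_mul, Measure.restrict_apply hE.compl]
    simp
  have hμ₀ac : μ₀ ≪ m := by
    intro s hs
    rw [hμ₀def, Measure.smul_apply, smul_eq_mul]
    have : m.restrict E s = 0 :=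
      le_antisymm (le_trans (Measure.restrict_le_self s) hs.le) zero_le
    rw [this, mul_zero]
  -- integral helpers
  have havg : ∀ f g : X → ℝ≥0∞, (∀ x ∈ E, f x = g x) →
      ∫⁻ x, f x ∂μ₀ = ∫⁻ x, g x ∂μ₀ := by
    intro f g hfg
    rw [hμ₀def, lintegral_smul_measure, lintegral_smul_measure]
    congr 1
    exact setLIntegral_congr_fun hE hfg
  have hbound : ∀ (f : X → ℝ≥0∞) (Cb : ℝ≥0∞), (∀ x ∈ E, f x ≤ Cb) →
      ∫⁻ x, f x ∂μ₀ ≤ Cb := by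
    intro f Cb hf
    rw [hμ₀def, lintegral_smul_measure]
    have h1 : ∫⁻ x in E, f x ∂m ≤ ∫⁻ _x in E, Cb ∂m := by
      refine lintegral_mono_ae ?_
      exact (ae_restrict_iff' hE).2 (Filter.Eventually.of_forall hf)
    rw [lintegral_const, Measure.restrict_apply_univ] at h1
    calc (m E)⁻¹ * ∫⁻ x in E, f x ∂m ≤ (m E)⁻¹ * (Cb * m E) := by
          exact mul_le_mul_right h1 _
      _ = Cb * ((m E)⁻¹ * m E) := by ring
      _ = Cb := by rw [ENNReal.inv_mul_cancel hpos hEtop, mul_one]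
  -- the target function
  set g : X → ℝ≥0∞ := fun x => ENNReal.ofReal ((ψ x - c) ^ 2) with hgdef
  have hgm : Measurable g := by
    rw [hgdef]
    exact (((hψc.sub continuous_const).pow 2).measurable).ennreal_ofReal
  clear_value g
  set I : ℝ≥0∞ := ∫⁻ x, g x ∂μ₀ with hIdef
  clear_value I
  -- the coupling
  have hp₁m : Measurable fun x => (x, T₁ x) := measurable_id.prodMk hT₁m
  have hp₂m : Measurable fun x => (x, T₂ x) := measurable_id.prodMk hT₂m
  set μ₁ : Measure X :=
    (1/2 : ℝ≥0∞) • Measure.map T₁ μ₀ + (1/2 : ℝ≥0∞) • Measure.map T₂ μ₀ with hμ₁def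
  clear_value μ₁
  set π : Measure (X × X) :=
    (1/2 : ℝ≥0∞) • Measure.map (fun x => (x, T₁ x)) μ₀
      + (1/2 : ℝ≥0∞) • Measure.map (fun x => (x, T₂ x)) μ₀ with hπdef
  clear_value π
  haveI : IsProbabilityMeasure (Measure.map T₁ μ₀) :=
    Measure.isProbabilityMeasure_map hT₁m.aemeasurable
  haveI : IsProbabilityMeasure (Measure.map T₂ μ₀) :=
    Measure.isProbabilityMeasure_map hT₂m.aemeasurable
  haveI : IsProbabilityMeasure (Measure.map (fun x => (x, T₁ x)) μ₀) :=
    Measure.isProbabilityMeasure_map hp₁m.aemeasurable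
  haveI : IsProbabilityMeasure (Measure.map (fun x => (x, T₂ x)) μ₀) :=
    Measure.isProbabilityMeasure_map hp₂m.aemeasurable
  have hhalf : (1/2 : ℝ≥0∞) + 1/2 = 1 := ENNReal.add_halves 1
  have hμ₁P : IsProbabilityMeasure μ₁ := by
    constructor
    simp only [hμ₁def, Measure.add_apply, Measure.smul_apply, measure_univ, smul_eq_mul,
      mul_one]
    exact hhalf
  have hπP : IsProbabilityMeasure π := by
    constructor
    simp only [hπdef, Measure.add_apply, Measure.smul_apply, measure_univ, smul_eq_mul,
      mul_one]
    exact hhalf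
  have hmf1 : (μ₀.map (fun x => (x, T₁ x))).map Prod.fst = μ₀ := by
    rw [Measure.map_map measurable_fst hp₁m]
    exact Measure.map_id
  have hmf2 : (μ₀.map (fun x => (x, T₂ x))).map Prod.fst = μ₀ := by
    rw [Measure.map_map measurable_fst hp₂m]
    exact Measure.map_id
  have hms1 : (μ₀.map (fun x => (x, T₁ x))).map Prod.snd = μ₀.map T₁ := by
    rw [Measure.map_map measurable_snd hp₁m]
    rfl
  have hms2 : (μ₀.map (fun x => (x, T₂ x))).map Prod.snd = μ₀.map T₂ := by
    rw [Measure.map_map measurable_snd hp₂m]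
    rfl
  have hfst : π.map Prod.fst = μ₀ := by
    rw [hπdef, Measure.map_add _ _ measurable_fst, Measure.map_smul, Measure.map_smul,
      hmf1, hmf2, ← add_smul, hhalf, one_smul]
  have hsnd : π.map Prod.snd = μ₁ := by
    rw [hπdef, Measure.map_add _ _ measurable_snd, Measure.map_smul, Measure.map_smul,
      hms1, hms2, hμ₁def]
  -- second moments
  have hmom₀ : ∃ x₀ : X, ∫⁻ x, ENNReal.ofReal (dist x x₀ ^ 2) ∂μ₀ < ⊤ := by
    refine ⟨a, lt_of_le_of_lt (hbound _ (ENNReal.ofReal ((n : ℝ) ^ 2)) ?_) ENNReal.ofReal_lt_top⟩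
    intro x hx
    refine ENNReal.ofReal_le_ofReal ?_
    have : dist x a ≤ (n : ℝ) := hx.2
    exact pow_le_pow_left₀ dist_nonneg this 2
  have hmom₁ : ∃ x₀ : X, ∫⁻ x, ENNReal.ofReal (dist x x₀ ^ 2) ∂μ₁ < ⊤ := by
    refine ⟨a, ?_⟩
    have hdm : Measurable fun y => ENNReal.ofReal (dist y a ^ 2) :=
      (((continuous_id.dist continuous_const).pow 2).measurable).ennreal_ofReal
    rw [hμ₁def, lintegral_add_measure, lintegral_smul_measure, lintegral_smul_measure,
      lintegral_map hdm hT₁m, lintegral_map hdm hT₂m]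
    have hb₁ : ∫⁻ x, ENNReal.ofReal (dist (T₁ x) a ^ 2) ∂μ₀ ≤ ENNReal.ofReal (r ^ 2) := by
      refine hbound _ _ fun x hx => ENNReal.ofReal_le_ofReal ?_
      exact pow_le_pow_left₀ dist_nonneg (hT₁E x hx).2.2 2
    have hb₂ : ∫⁻ x, ENNReal.ofReal (dist (T₂ x) a ^ 2) ∂μ₀
        ≤ ENNReal.ofReal ((r + dist b a) ^ 2) := by
      refine hbound _ _ fun x hx => ENNReal.ofReal_le_ofReal ?_
      refine pow_le_pow_left₀ dist_nonneg ?_ 2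
      calc dist (T₂ x) a ≤ dist (T₂ x) b + dist b a := dist_triangle _ _ _
        _ ≤ r + dist b a := by
            have := (hT₂E x hx).2.2
            rw [mem_closedBall] at this
            linarith
    calc (1/2 : ℝ≥0∞) * ∫⁻ x, ENNReal.ofReal (dist (T₁ x) a ^ 2) ∂μ₀
          + (1/2 : ℝ≥0∞) * ∫⁻ x, ENNReal.ofReal (dist (T₂ x) a ^ 2) ∂μ₀
        ≤ (1/2 : ℝ≥0∞) * ENNReal.ofReal (r ^ 2)
          + (1/2 : ℝ≥0∞) * ENNReal.ofReal ((r + dist b a) ^ 2) := by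
          exact add_le_add (mul_le_mul_right hb₁ _) (mul_le_mul_right hb₂ _)
      _ < ⊤ := by
          refine ENNReal.add_lt_top.2 ⟨?_, ?_⟩ <;>
            exact ENNReal.mul_lt_top (by norm_num) ENNReal.ofReal_lt_top
  -- cost of π
  have hcostm : Measurable fun p : X × X => ENNReal.ofReal (dist p.1 p.2 ^ 2) :=
    (measurable_dist.pow_const 2).ennreal_ofReal
  have hcostπ : ∫⁻ p, ENNReal.ofReal (dist p.1 p.2 ^ 2) ∂π = I := by
    rw [hπdef, lintegral_add_measure, lintegral_smul_measure, lintegral_smul_measure,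
      lintegral_map hcostm hp₁m, lintegral_map hcostm hp₂m]
    have e₁ : ∫⁻ x, ENNReal.ofReal (dist x (T₁ x) ^ 2) ∂μ₀ = I := by
      rw [hIdef]
      exact havg _ _ fun x hx => by rw [hd₁ x hx, hgdef]
    have e₂ : ∫⁻ x, ENNReal.ofReal (dist x (T₂ x) ^ 2) ∂μ₀ = I := by
      rw [hIdef]
      exact havg _ _ fun x hx => by rw [hd₂ x hx, hgdef]
    rw [e₁, e₂, smul_eq_mul, ← add_mul, hhalf, one_mul]
  -- optimality
  have hopt : ∀ π' : Measure (X × X), IsProbabilityMeasure π' →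
      π'.map Prod.fst = μ₀ → π'.map Prod.snd = μ₁ →
      ∫⁻ p, ENNReal.ofReal (dist p.1 p.2 ^ 2) ∂π ≤
        ∫⁻ p, ENNReal.ofReal (dist p.1 p.2 ^ 2) ∂π' := by
    intro π' hπ'P h1 h2
    rw [hcostπ]
    set N : Set X := {y | ψ y ≠ c} with hNdef
    have hNm : MeasurableSet N := (hψm (measurableSet_singleton c)).compl
    have hμ₁N : μ₁ N = 0 := by
      rw [hμ₁def, Measure.add_apply, Measure.smul_apply, Measure.smul_apply,
        Measure.map_apply hT₁m hNm, Measure.map_apply hT₂m hNm, smul_eq_mul, smul_eq_mul]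
      have hz₁ : μ₀ (T₁ ⁻¹' N) = 0 := by
        refine measure_mono_null ?_ hμ₀Ec
        intro x hx hxE
        exact hx ((hT₁E x hxE).2.1)
      have hz₂ : μ₀ (T₂ ⁻¹' N) = 0 := by
        refine measure_mono_null ?_ hμ₀Ec
        intro x hx hxE
        exact hx ((hT₂E x hxE).2.1)
      rw [hz₁, hz₂]
      simp
    have hπ'N : π' {p : X × X | ψ p.2 = c}ᶜ = 0 := by
      have hmap := Measure.map_apply (μ := π') measurable_snd hNm
      rw [h2] at hmap
      calc π' {p : X × X | ψ p.2 = c}ᶜ = π' (Prod.snd ⁻¹' N) := rfl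
        _ = μ₁ N := hmap.symm
        _ = 0 := hμ₁N
    have hae : ∀ᵐ p ∂π', ψ p.2 = c := by
      rw [MeasureTheory.ae_iff]
      exact hπ'N
    have hmono : ∫⁻ p, g p.1 ∂π' ≤ ∫⁻ p, ENNReal.ofReal (dist p.1 p.2 ^ 2) ∂π' := by
      refine lintegral_mono_ae ?_
      filter_upwards [hae] with p hp
      rw [hgdef]
      refine ENNReal.ofReal_le_ofReal ?_
      have hlip : |ψ p.1 - ψ p.2| ≤ dist p.1 p.2 := by
        have h := hψ.dist_le_mul p.1 p.2
        rw [Real.dist_eq, NNReal.coe_one, one_mul] at h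
        exact h
      rw [← hp]
      have h1' := (abs_le.1 hlip).1
      have h2' := (abs_le.1 hlip).2
      exact sq_le_sq' (by linarith) h2'
    refine le_trans (le_of_eq ?_) hmono
    calc I = ∫⁻ x, g x ∂(π'.map Prod.fst) := by rw [h1]; exact hIdef
      _ = ∫⁻ p, g p.1 ∂π' := lintegral_map hgm measurable_fst
  -- apply the hypothesis
  obtain ⟨T, hTm, hT1⟩ := H μ₀ μ₁ hμ₀P hμ₁P hmom₀ hmom₁ hμ₀ac π hπP hfst hsnd hopt
  have hSm : MeasurableSet {p : X × X | p.2 = T p.1} :=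
    MeasureTheory.StronglyMeasurable.measurableSet_eq_fun measurable_snd.stronglyMeasurable
      ((hTm.comp measurable_fst).stronglyMeasurable)
  have hA₁m : MeasurableSet {x | T₁ x = T x} :=
    MeasureTheory.StronglyMeasurable.measurableSet_eq_fun hT₁m.stronglyMeasurable hTm.stronglyMeasurable
  have hA₂m : MeasurableSet {x | T₂ x = T x} :=
    MeasureTheory.StronglyMeasurable.measurableSet_eq_fun hT₂m.stronglyMeasurable hTm.stronglyMeasurable
  have hπS : π {p : X × X | p.2 = T p.1}
      = (1/2 : ℝ≥0∞) * μ₀ {x | T₁ x = T x} + (1/2 : ℝ≥0∞) * μ₀ {x | T₂ x = T x} := by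
    rw [hπdef, Measure.add_apply, Measure.smul_apply, Measure.smul_apply,
      Measure.map_apply hp₁m hSm, Measure.map_apply hp₂m hSm, smul_eq_mul, smul_eq_mul]
    rfl
  have honehalf : (1:ℝ≥0∞)/2 ≠ ⊤ := by norm_num
  have hkey : ∀ s t : Set X, π {p : X × X | p.2 = T p.1}
      = (1/2 : ℝ≥0∞) * μ₀ s + (1/2 : ℝ≥0∞) * μ₀ t → μ₀ s = 1 := by
    intro s t hst
    refine le_antisymm prob_le_one ?_
    have h1 : (1/2 : ℝ≥0∞) + 1/2 ≤ (1/2 : ℝ≥0∞) * μ₀ s + 1/2 := by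
      calc (1/2 : ℝ≥0∞) + 1/2 = 1 := hhalf
        _ = (1/2 : ℝ≥0∞) * μ₀ s + (1/2 : ℝ≥0∞) * μ₀ t := by rw [← hst, hT1]
        _ ≤ (1/2 : ℝ≥0∞) * μ₀ s + (1/2 : ℝ≥0∞) * 1 :=
            add_le_add_right (mul_le_mul_right prob_le_one _) _
        _ = (1/2 : ℝ≥0∞) * μ₀ s + 1/2 := by rw [mul_one]
    have h2 : (1/2 : ℝ≥0∞) ≤ (1/2 : ℝ≥0∞) * μ₀ s := (ENNReal.add_le_add_iff_right honehalf).1 h1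
    have h3 : (1/2 : ℝ≥0∞) * 1 ≤ (1/2 : ℝ≥0∞) * μ₀ s := by rwa [mul_one]
    exact (ENNReal.mul_le_mul_iff_right (by norm_num) honehalf).1 h3
  have hA₁ : μ₀ {x | T₁ x = T x} = 1 := hkey _ _ hπS
  have hA₂ : μ₀ {x | T₂ x = T x} = 1 := hkey _ _ (by rw [hπS, add_comm])
  have hc₁ : μ₀ {x | T₁ x = T x}ᶜ = 0 := by
    rw [measure_compl hA₁m (measure_ne_top _ _), hA₁, measure_univ, tsub_self]
  have hc₂ : μ₀ {x | T₂ x = T x}ᶜ = 0 := by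
    rw [measure_compl hA₂m (measure_ne_top _ _), hA₂, measure_univ, tsub_self]
  have hne : ({x | T₁ x = T x} ∩ {x | T₂ x = T x} ∩ E).Nonempty := by
    rw [nonempty_iff_ne_empty]
    intro hempty
    have hsub2 : (univ : Set X) ⊆ {x | T₁ x = T x}ᶜ ∪ ({x | T₂ x = T x}ᶜ ∪ Eᶜ) := by
      intro x _
      by_contra hx
      simp only [mem_union, mem_compl_iff, not_or, not_not] at hx
      have : x ∈ ({x | T₁ x = T x} ∩ {x | T₂ x = T x} ∩ E) := ⟨⟨hx.1, hx.2.1⟩, hx.2.2⟩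
      rw [hempty] at this
      exact this
    have hle : μ₀ univ ≤ μ₀ ({x | T₁ x = T x}ᶜ) + (μ₀ ({x | T₂ x = T x}ᶜ) + μ₀ Eᶜ) :=
      le_trans (measure_mono hsub2)
        (le_trans (measure_union_le _ _) (add_le_add_right (measure_union_le _ _) _))
    rw [hc₁, hc₂, hμ₀Ec, hμ₀univ, add_zero, add_zero] at hle
    exact absurd hle (by norm_num)
  obtain ⟨x, ⟨hx1, hx2⟩, hxE⟩ := hne
  have h1ball := (hT₁E x hxE).2.2
  have h2ball := (hT₂E x hxE).2.2
  rw [mem_closedBall] at h1ball h2ball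
  have h12 : T₁ x = T₂ x := by
    rw [mem_setOf_eq] at hx1 hx2
    rw [hx1, ← hx2]
  have hfin : dist a b ≤ 2 * r := by
    calc dist a b ≤ dist a (T₁ x) + dist (T₁ x) b := dist_triangle _ _ _
      _ = dist (T₁ x) a + dist (T₂ x) b := by rw [dist_comm, h12]
      _ ≤ r + r := add_le_add h1ball h2ball
      _ = 2 * r := by ring
  linarith

end Null

section Cover
variable [MetricSpace X] {ψ : X → ℝ}

lemma gamma_along (hψ : LipschitzWith 1 ψ) {x z : X} (hxz : (x, z) ∈ Gamma ψ)
    {γ : ℝ → X} (hγ : IsGeodesic γ) (h0 : γ 0 = x) (h1 : γ 1 = z) {t : ℝ}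
    (ht : t ∈ Icc (0:ℝ) 1) :
    (x, γ t) ∈ Gamma ψ ∧ ψ (γ t) = ψ x - t * dist x z := by
  have h01 : (0:ℝ) ∈ Icc (0:ℝ) 1 := ⟨le_refl 0, zero_le_one⟩
  have h11 : (1:ℝ) ∈ Icc (0:ℝ) 1 := ⟨zero_le_one, le_refl 1⟩
  have hd0t : dist x (γ t) = t * dist x z := by
    have h := hγ 0 h01 t ht
    rw [h0, h1] at h
    rw [h, abs_of_nonpos (show (0:ℝ) - t ≤ 0 by linarith [ht.1])]
    ring
  have hdt1 : dist (γ t) z = (1 - t) * dist x z := by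
    have h := hγ t ht 1 h11
    rw [h0, h1] at h
    rw [h, abs_of_nonpos (show t - 1 ≤ 0 by linarith [ht.2])]
    ring
  have ha : ψ x - ψ (γ t) ≤ t * dist x z := by
    have h := lip_diff_le hψ x (γ t)
    rw [hd0t] at h
    exact h
  have hb : ψ (γ t) - ψ z ≤ (1 - t) * dist x z := by
    have h := lip_diff_le hψ (γ t) z
    rw [hdt1] at h
    exact h
  have hsum : ψ x - ψ z = dist x z := hxz
  have hEq : ψ x - ψ (γ t) = t * dist x z := by linarith
  refine ⟨?_, by linarith⟩
  show ψ x - ψ (γ t) = dist x (γ t)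
  rw [hEq, hd0t]

lemma geo_dist {γ : ℝ → X} (hγ : IsGeodesic γ) {d e e' : ℝ} (hd : 0 < d)
    (hdist : dist (γ 0) (γ 1) = d)
    (he : 0 ≤ e) (hed : e ≤ d) (he' : 0 ≤ e') (he'd : e' ≤ d) :
    dist (γ (e / d)) (γ (e' / d)) = |e - e'| := by
  have hmem : e / d ∈ Icc (0:ℝ) 1 := ⟨by positivity, (div_le_one hd).2 hed⟩
  have hmem' : e' / d ∈ Icc (0:ℝ) 1 := ⟨by positivity, (div_le_one hd).2 he'd⟩
  have h := hγ (e / d) hmem (e' / d) hmem'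
  rw [hdist] at h
  rw [h, div_sub_div_same, abs_div, abs_of_pos hd, div_mul_cancel₀ _ hd.ne']

lemma aplus_mem_bad (hψ : LipschitzWith 1 ψ) (hgeod : GeodesicSpace X)
    {u : ℕ → X} (hu : DenseRange u) {x : X} (hx : x ∈ Aplus ψ) :
    ∃ (c : ℚ) (i j : ℕ) (s : ℚ), 2 * (s:ℝ) < dist (u i) (u j) ∧
      x ∈ BadSet ψ (c:ℝ) (u i) (u j) (s:ℝ) := by
  obtain ⟨-, z, hz', w, hw', hzw⟩ := hx
  have hxz : x ≠ z := by
    rintro rfl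
    exact hzw (Or.inl hw')
  have hxw : x ≠ w := by
    rintro rfl
    exact hzw (Or.inr hz')
  have hdxz : 0 < dist x z := dist_pos.2 hxz
  have hdxw : 0 < dist x w := dist_pos.2 hxw
  obtain ⟨γ, hγ, hγ0, hγ1⟩ := hgeod x z
  obtain ⟨η, hη, hη0, hη1⟩ := hgeod x w
  have hγd : dist (γ 0) (γ 1) = dist x z := by rw [hγ0, hγ1]
  have hηd : dist (η 0) (η 1) = dist x w := by rw [hη0, hη1]
  set zpt : ℝ → X := fun e => γ (e / dist x z) with hzptdef
  set wpt : ℝ → X := fun e => η (e / dist x w) with hwptdef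
  have hzpt : ∀ e : ℝ, 0 ≤ e → e ≤ dist x z →
      (x, zpt e) ∈ Gamma ψ ∧ ψ (zpt e) = ψ x - e := by
    intro e he hed
    have hmem : e / dist x z ∈ Icc (0:ℝ) 1 := ⟨by positivity, (div_le_one hdxz).2 hed⟩
    obtain ⟨hg, hl⟩ := gamma_along hψ hz' hγ hγ0 hγ1 hmem
    exact ⟨hg, by rw [hl, div_mul_cancel₀ _ hdxz.ne']⟩
  have hwpt : ∀ e : ℝ, 0 ≤ e → e ≤ dist x w →
      (x, wpt e) ∈ Gamma ψ ∧ ψ (wpt e) = ψ x - e := by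
    intro e he hed
    have hmem : e / dist x w ∈ Icc (0:ℝ) 1 := ⟨by positivity, (div_le_one hdxw).2 hed⟩
    obtain ⟨hg, hl⟩ := gamma_along hψ hw' hη hη0 hη1 hmem
    exact ⟨hg, by rw [hl, div_mul_cancel₀ _ hdxw.ne']⟩
  have hzd : ∀ e e' : ℝ, 0 ≤ e → e ≤ dist x z → 0 ≤ e' → e' ≤ dist x z →
      dist (zpt e) (zpt e') = |e - e'| := fun e e' he hed he' he'd =>
    geo_dist hγ hdxz hγd he hed he' he'd
  have hwd : ∀ e e' : ℝ, 0 ≤ e → e ≤ dist x w → 0 ≤ e' → e' ≤ dist x w →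
      dist (wpt e) (wpt e') = |e - e'| := fun e e' he hed he' he'd =>
    geo_dist hη hdxw hηd he hed he' he'd
  have hz1 : zpt (dist x z) = z := by
    show γ (dist x z / dist x z) = z
    rw [div_self hdxz.ne']
    exact hγ1
  have hw1 : wpt (dist x w) = w := by
    show η (dist x w / dist x w) = w
    rw [div_self hdxw.ne']
    exact hη1
  set ε₀ : ℝ := min (dist x z) (dist x w) with hε₀def
  have hε₀ : 0 < ε₀ := lt_min hdxz hdxw
  have hε₀z : ε₀ ≤ dist x z := min_le_left _ _
  have hε₀w : ε₀ ≤ dist x w := min_le_right _ _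
  have hψz : ψ z = ψ x - dist x z := by
    have : ψ x - ψ z = dist x z := hz'
    linarith
  have hψw : ψ w = ψ x - dist x w := by
    have : ψ x - ψ w = dist x w := hw'
    linarith
  -- the two points at arclength ε₀ are distinct
  have hne0 : zpt ε₀ ≠ wpt ε₀ := by
    intro heq
    rcases le_total (dist x z) (dist x w) with hle | hle
    · have hdz : ε₀ = dist x z := min_eq_left hle
      have hzeq : z = wpt ε₀ := by rw [← hz1, ← hdz, heq]
      refine hzw (Or.inl ?_)
      show ψ z - ψ w = dist z w
      have hdzw : dist z w = dist x w - ε₀ := by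
        calc dist z w = dist (wpt ε₀) (wpt (dist x w)) := by rw [hzeq, hw1]
          _ = |ε₀ - dist x w| := hwd ε₀ (dist x w) hε₀.le hε₀w hdxw.le le_rfl
          _ = dist x w - ε₀ := by rw [abs_of_nonpos (by linarith)]; ring
      rw [hψz, hψw, hdzw, ← hdz]
      ring
    · have hdw : ε₀ = dist x w := min_eq_right hle
      have hweq : w = zpt ε₀ := by rw [← hw1, ← hdw, ← heq]
      refine hzw (Or.inr ?_)
      show ψ w - ψ z = dist w z
      have hdwz : dist w z = dist x z - ε₀ := by
        calc dist w z = dist (zpt ε₀) (zpt (dist x z)) := by rw [hweq, hz1]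
          _ = |ε₀ - dist x z| := hzd ε₀ (dist x z) hε₀.le hε₀z hdxz.le le_rfl
          _ = dist x z - ε₀ := by rw [abs_of_nonpos (by linarith)]; ring
      rw [hψz, hψw, hdwz, ← hdw]
      ring
  set d₀ : ℝ := dist (zpt ε₀) (wpt ε₀) with hd₀def
  have hd₀ : 0 < d₀ := dist_pos.2 hne0
  -- choose a rational level
  obtain ⟨c, hc1, hc2⟩ := exists_rat_btwn
    (show ψ x - ε₀ < min (ψ x) (ψ x - ε₀ + d₀ / 4) from
      lt_min (by linarith) (by linarith))
  have hcx : (c:ℝ) < ψ x := lt_of_lt_of_le hc2 (min_le_left _ _)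
  have hcd : (c:ℝ) < ψ x - ε₀ + d₀ / 4 := lt_of_lt_of_le hc2 (min_le_right _ _)
  set e : ℝ := ψ x - c with hedef
  have he0 : 0 < e := by rw [hedef]; linarith
  have heε : e < ε₀ := by rw [hedef]; linarith
  have heεd : ε₀ - e < d₀ / 4 := by rw [hedef]; linarith
  obtain ⟨hgz, hlz⟩ := hzpt e he0.le (by linarith)
  obtain ⟨hgw, hlw⟩ := hwpt e he0.le (by linarith)
  have hlevz : ψ (zpt e) = c := by rw [hlz, hedef]; ring
  have hlevw : ψ (wpt e) = c := by rw [hlw, hedef]; ring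
  -- the two level points are far apart
  have hsep : d₀ / 2 < dist (zpt e) (wpt e) := by
    have h1 : dist (zpt e) (zpt ε₀) = ε₀ - e := by
      rw [hzd e ε₀ he0.le (by linarith) hε₀.le hε₀z, abs_of_nonpos (by linarith)]
      ring
    have h2 : dist (wpt e) (wpt ε₀) = ε₀ - e := by
      rw [hwd e ε₀ he0.le (by linarith) hε₀.le hε₀w, abs_of_nonpos (by linarith)]
      ring
    have h3 : d₀ ≤ dist (zpt ε₀) (zpt e) + dist (zpt e) (wpt e) + dist (wpt e) (wpt ε₀) := by
      rw [hd₀def]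
      calc dist (zpt ε₀) (wpt ε₀) ≤ dist (zpt ε₀) (wpt e) + dist (wpt e) (wpt ε₀) :=
            dist_triangle _ _ _
        _ ≤ dist (zpt ε₀) (zpt e) + dist (zpt e) (wpt e) + dist (wpt e) (wpt ε₀) := by
            have := dist_triangle (zpt ε₀) (zpt e) (wpt e)
            linarith
    rw [dist_comm (zpt ε₀) (zpt e), h1, h2] at h3
    linarith
  have hsep0 : 0 < dist (zpt e) (wpt e) := lt_trans (by linarith) hsep
  -- choose rational radius and centers
  obtain ⟨s, hs1, hs2⟩ := exists_rat_btwn (show (0:ℝ) < dist (zpt e) (wpt e) / 4 by linarith)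
  obtain ⟨i, hi⟩ := hu.exists_dist_lt (zpt e) (show (0:ℝ) < s from hs1)
  obtain ⟨j, hj⟩ := hu.exists_dist_lt (wpt e) (show (0:ℝ) < s from hs1)
  refine ⟨c, i, j, s, ?_, ?_, ?_⟩
  · have h4 : dist (zpt e) (wpt e)
        ≤ dist (zpt e) (u i) + dist (u i) (u j) + dist (u j) (wpt e) := by
      calc dist (zpt e) (wpt e) ≤ dist (zpt e) (u j) + dist (u j) (wpt e) := dist_triangle _ _ _
        _ ≤ dist (zpt e) (u i) + dist (u i) (u j) + dist (u j) (wpt e) := by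
            have := dist_triangle (zpt e) (u i) (u j)
            linarith
    have hj' : dist (u j) (wpt e) < s := by rw [dist_comm]; exact hj
    linarith
  · exact ⟨(x, zpt e), ⟨hgz, hlevz, mem_closedBall.2 hi.le⟩, rfl⟩
  · exact ⟨(x, wpt e), ⟨hgw, hlevw, mem_closedBall.2 hj.le⟩, rfl⟩

end Cover

section Assemble
variable [MetricSpace X]

lemma gamma_neg (ψ : X → ℝ) : Gamma (fun y => -ψ y) = GammaInv ψ := by
  ext p
  show (-ψ p.1) - (-ψ p.2) = dist p.1 p.2 ↔ ψ p.2 - ψ p.1 = dist p.2 p.1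
  rw [dist_comm p.2 p.1]
  constructor <;> intro h <;> linarith

lemma gammaInv_neg (ψ : X → ℝ) : GammaInv (fun y => -ψ y) = Gamma ψ := by
  ext p
  show (-ψ p.2) - (-ψ p.1) = dist p.2 p.1 ↔ ψ p.1 - ψ p.2 = dist p.1 p.2
  rw [dist_comm p.2 p.1]
  constructor <;> intro h <;> linarith

lemma rays_neg (ψ : X → ℝ) : Rays (fun y => -ψ y) = Rays ψ := by
  rw [Rays, Rays, gamma_neg, gammaInv_neg, union_comm]

lemma te_neg (ψ : X → ℝ) : Te (fun y => -ψ y) = Te ψ := by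
  rw [Te, Te, gamma_neg, gammaInv_neg, union_comm]

lemma aminus_eq (ψ : X → ℝ) : Aminus ψ = Aplus (fun y => -ψ y) := by
  have h1 : ∀ x : X, GammaOf (fun y => -ψ y) x = GammaInvOf ψ x := by
    intro x
    ext y
    show (x, y) ∈ Gamma (fun y => -ψ y) ↔ (x, y) ∈ GammaInv ψ
    rw [gamma_neg]
  ext x
  simp only [Aminus, Aplus, mem_setOf_eq, te_neg, rays_neg, h1]

lemma aplus_null [ProperSpace X] [MeasurableSpace X] [BorelSpace X]
    (hgeod : GeodesicSpace X) (m : Measure X) [IsProbabilityMeasure m]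
    {ψ : X → ℝ} (hψ : LipschitzWith 1 ψ)
    (H : ∀ μ₀ μ₁ : Measure X, IsProbabilityMeasure μ₀ → IsProbabilityMeasure μ₁ →
      (∃ x₀ : X, ∫⁻ x, ENNReal.ofReal (dist x x₀ ^ 2) ∂μ₀ < ⊤) →
      (∃ x₀ : X, ∫⁻ x, ENNReal.ofReal (dist x x₀ ^ 2) ∂μ₁ < ⊤) →
      μ₀ ≪ m →
      ∀ π : Measure (X × X), IsProbabilityMeasure π →
        π.map Prod.fst = μ₀ → π.map Prod.snd = μ₁ →
        (∀ π' : Measure (X × X), IsProbabilityMeasure π' →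
          π'.map Prod.fst = μ₀ → π'.map Prod.snd = μ₁ →
          ∫⁻ p, ENNReal.ofReal (dist p.1 p.2 ^ 2) ∂π ≤
            ∫⁻ p, ENNReal.ofReal (dist p.1 p.2 ^ 2) ∂π') →
        ∃ T : X → X, Measurable T ∧ π {p : X × X | p.2 = T p.1} = 1) :
    m (Aplus ψ) = 0 := by
  rcases isEmpty_or_nonempty X with hE | hNE
  · have : Aplus ψ = ∅ := eq_empty_of_isEmpty _
    rw [this]
    exact measure_empty
  · set u : ℕ → X := TopologicalSpace.denseSeq X with hudef
    have hu : DenseRange u := TopologicalSpace.denseRange_denseSeq X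
    have hsub : Aplus ψ ⊆ ⋃ (c : ℚ) (i : ℕ) (j : ℕ) (s : ℚ)
        (_ : 2 * (s:ℝ) < dist (u i) (u j)), BadSet ψ (c:ℝ) (u i) (u j) (s:ℝ) := by
      intro x hx
      obtain ⟨c, i, j, s, hcond, hmem⟩ := aplus_mem_bad hψ hgeod hu hx
      exact mem_iUnion.2 ⟨c, mem_iUnion.2 ⟨i, mem_iUnion.2 ⟨j,
        mem_iUnion.2 ⟨s, mem_iUnion.2 ⟨hcond, hmem⟩⟩⟩⟩⟩
    refine measure_mono_null hsub ?_
    refine measure_iUnion_null fun c => measure_iUnion_null fun i =>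
      measure_iUnion_null fun j => measure_iUnion_null fun s => ?_
    by_cases hcond : 2 * (s:ℝ) < dist (u i) (u j)
    · refine measure_mono_null (iUnion_subset fun _ => subset_rfl) ?_
      exact badset_null m hψ H c (u i) (u j) s hcond
    · have : (⋃ (_ : 2 * (s:ℝ) < dist (u i) (u j)),
          BadSet ψ (c:ℝ) (u i) (u j) (s:ℝ)) = ∅ := by
        simp [hcond]
      rw [this]
      exact measure_empty

end Assemble


theorem stmt9 [MetricSpace X] [MeasurableSpace X] [BorelSpace X]
    (hproper : ProperSpace X) (hgeod : GeodesicSpace X)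
    (m : Measure X) [IsProbabilityMeasure m]
    (φ : X → ℝ) (hφ : LipschitzWith 1 φ)
    (H : ∀ μ₀ μ₁ : Measure X, IsProbabilityMeasure μ₀ → IsProbabilityMeasure μ₁ →
      (∃ x₀ : X, ∫⁻ x, ENNReal.ofReal (dist x x₀ ^ 2) ∂μ₀ < ⊤) →
      (∃ x₀ : X, ∫⁻ x, ENNReal.ofReal (dist x x₀ ^ 2) ∂μ₁ < ⊤) →
      μ₀ ≪ m →
      ∀ π : Measure (X × X), IsProbabilityMeasure π →
        π.map Prod.fst = μ₀ → π.map Prod.snd = μ₁ →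
        (∀ π' : Measure (X × X), IsProbabilityMeasure π' →
          π'.map Prod.fst = μ₀ → π'.map Prod.snd = μ₁ →
          ∫⁻ p, ENNReal.ofReal (dist p.1 p.2 ^ 2) ∂π ≤
            ∫⁻ p, ENNReal.ofReal (dist p.1 p.2 ^ 2) ∂π') →
        ∃ T : X → X, Measurable T ∧ π {p : X × X | p.2 = T p.1} = 1) :
    (∀ x ∈ Tset φ, (x, x) ∈ Rays φ) ∧
    (∀ x ∈ Tset φ, ∀ y ∈ Tset φ, (x, y) ∈ Rays φ → (y, x) ∈ Rays φ) ∧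
    (∀ x ∈ Tset φ, ∀ z ∈ Tset φ, ∀ w ∈ Tset φ,
      (x, z) ∈ Rays φ → (z, w) ∈ Rays φ → (x, w) ∈ Rays φ) ∧
    m (Te φ \ Tset φ) = 0 := by
  refine ⟨fun x _ => Or.inl (gamma_refl φ x), fun x _ y _ h => rays_symm h, ?_, ?_⟩
  · -- transitivity
    intro x _ z hz w _ h1 h2
    by_cases hxz : x = z
    · subst hxz; exact h2
    by_cases hzw : z = w
    · subst hzw; exact h1
    by_cases hxw : x = w
    · subst hxw; exact Or.inl (gamma_refl φ x)
    by_contra hcon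
    rcases h1 with h1 | h1 <;> rcases h2 with h2 | h2
    · exact hcon (Or.inl (gamma_trans hφ h1 h2))
    · -- (x,z) ∈ Γ, (w,z) ∈ Γ : z ∈ Aminus
      refine hz.2 (Or.inr ⟨?_, x, h1, w, h2, hcon⟩)
      exact Or.inr ⟨(z, x), ⟨h1, fun h => hxz (h.symm)⟩, rfl⟩
    · -- (z,x) ∈ Γ, (z,w) ∈ Γ : z ∈ Aplus
      refine hz.2 (Or.inl ⟨?_, x, h1, w, h2, hcon⟩)
      exact Or.inl ⟨(z, x), ⟨h1, fun h => hxz h.symm⟩, rfl⟩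
    · refine hcon (Or.inr (gamma_trans hφ h2 h1))
  · haveI := hproper
    have hTe : Te φ \ Tset φ ⊆ Aplus φ ∪ Aminus φ := by
      intro x hx
      by_contra hc
      exact hx.2 ⟨hx.1, hc⟩
    refine measure_mono_null hTe (measure_union_null ?_ ?_)
    · exact aplus_null hgeod m hφ H
    · rw [aminus_eq φ]
      exact aplus_null hgeod m hφ.neg H
end

section
/- Let η be a finite Borel measure on ℝ such that for every Borel set A ⊆ ℝ with η(A) > 0 it holds ∫_{0}^{∞} η(A + t) dt > 0, where A + t := {a + t : a ∈ A}. Then η is absolutely continuous with respect to the 1-dimensional Lebesgue measure. -/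
open Set MeasureTheory

/-- Tonelli, together with `∫⁻ t, 1_A (x - t) ∂μ = μ A` for every `x`. -/
theorem lintegral_measure_image_add_right {G : Type*} [MeasurableSpace G] [AddGroup G]
    [MeasurableAdd₂ G] [MeasurableNeg G] (μ η : Measure G) [SFinite μ] [SFinite η]
    [μ.IsAddLeftInvariant] [μ.IsNegInvariant] {A : Set G} (hA : MeasurableSet A) :
    ∫⁻ t, η ((· + t) '' A) ∂μ = η univ * μ A := by
  have h_translate (t : G) : η ((· + t) '' A) = ∫⁻ x, A.indicator 1 (x - t) ∂η := by
    simp_rw [image_add_right, ← sub_eq_add_neg]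
    rw [← lintegral_indicator_one (hA.preimage (measurable_sub_const t))]
    rfl
  have h_meas : AEMeasurable (Function.uncurry fun t x : G => A.indicator (1 : G → ENNReal) (x - t))
      (μ.prod η) :=
    ((measurable_const.indicator hA).comp (measurable_snd.sub measurable_fst)).aemeasurable
  have h_section (x : G) : ∫⁻ t, A.indicator 1 (x - t) ∂μ = μ A :=
    ((Measure.measurePreserving_sub_left μ x).lintegral_comp
      (measurable_const.indicator hA)).trans (lintegral_indicator_one hA)
  calc ∫⁻ t, η ((· + t) '' A) ∂μ
      = ∫⁻ t, ∫⁻ x, A.indicator 1 (x - t) ∂η ∂μ := by simp_rw [h_translate]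
    _ = ∫⁻ x, ∫⁻ t, A.indicator 1 (x - t) ∂μ ∂η := lintegral_lintegral_swap h_meas
    _ = η univ * μ A := by simp_rw [h_section, lintegral_const, mul_comm]

theorem stmt14 (η : Measure ℝ) [IsFiniteMeasure η]
    (h : ∀ A : Set ℝ, MeasurableSet A → 0 < η A →
      0 < ∫⁻ t in Set.Ioi (0:ℝ), η ((fun a => a + t) '' A)) :
    η ≪ (volume : Measure ℝ) := by
  refine Measure.AbsolutelyContinuous.mk fun A hA hA_null => ?_
  by_contra hA_pos
  have h_total : ∫⁻ t, η ((· + t) '' A) = 0 := by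
    rw [lintegral_measure_image_add_right volume η hA, hA_null, mul_zero]
  have h_half_line := (h A hA (pos_iff_ne_zero.mpr hA_pos)).trans_le
    (setLIntegral_le_lintegral (Ioi 0) _)
  exact h_half_line.ne' h_total
end

section
/- For every Borel set C ⊂ 𝒯 and every δ ∈ ℝ, the set (C × {x ∈ X : φ(x) = δ}) ∩ Γ is d²-cyclically monotone. -/
open Set MeasureTheory

variable {X : Type*}

/-- `d²`-cyclical monotonicity. -/
def CyclMono2 [MetricSpace X] (Λ : Set (X × X)) : Prop :=
  ∀ (n : ℕ) (p : Fin (n + 1) → X × X), (∀ i, p i ∈ Λ) →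
    ∑ i, dist (p i).1 (p i).2 ^ 2 ≤ ∑ i, dist (p i).1 (p (i + 1)).2 ^ 2

theorem cyclMono2_of_forall_dist_le [MetricSpace X] {Λ : Set (X × X)}
    (h : ∀ p ∈ Λ, ∀ q ∈ Λ, dist p.1 p.2 ≤ dist p.1 q.2) : CyclMono2 Λ := by
  intro n p hp
  gcongr with i
  exact h _ (hp i) _ (hp (i + 1))

theorem dist_le_of_mem_Gamma [MetricSpace X] {φ : X → ℝ} (hφ : LipschitzWith 1 φ) {x y y' : X}
    (hxy : (x, y) ∈ Gamma φ) (hy : φ y' = φ y) : dist x y ≤ dist x y' := by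
  have hlip : φ x ≤ φ y' + dist x y' := by simpa using hφ.le_add_mul x y'
  calc dist x y = φ x - φ y := hxy.symm
    _ ≤ dist x y' := by linarith

theorem stmt17_general [MetricSpace X]
    (φ : X → ℝ) (hφ : LipschitzWith 1 φ)
    (C : Set X) (δ : ℝ) :
    CyclMono2 ((C ×ˢ {x : X | φ x = δ}) ∩ Gamma φ) := by
  apply cyclMono2_of_forall_dist_le
  rintro ⟨x, y⟩ ⟨⟨-, hy⟩, hxy⟩ ⟨x', y'⟩ ⟨⟨-, hy'⟩, -⟩
  exact dist_le_of_mem_Gamma hφ hxy (hy'.trans hy.symm)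

theorem stmt17 [MetricSpace X] [MeasurableSpace X] [BorelSpace X]
    (hproper : ProperSpace X) (hgeod : GeodesicSpace X)
    (φ : X → ℝ) (hφ : LipschitzWith 1 φ)
    (C : Set X) (hC : MeasurableSet C) (hCT : C ⊆ Tset φ) (δ : ℝ) :
    CyclMono2 ((C ×ˢ {x : X | φ x = δ}) ∩ Gamma φ) :=
  stmt17_general φ hφ C δ
end

section
/- Let μ₀, μ₁ be Borel probability measures on ℝ with μ₀ atomless, and define the left-continuous distribution functions H(s) := μ₀((−∞,s)) and F(t) := μ₁((−∞,t)), and the monotone rearrangement T(s) := sup{t ∈ ℝ : F(t) ≤ H(s)} (a non-decreasing map with values in ℝ ∪ {−∞,+∞}, μ₀-a.e. real-valued). Then: (1) T pushes μ₀ forward to μ₁, i.e. T#μ₀ = μ₁, and any other non-decreasing map T' with T'#μ₀ = μ₁ coincides with T on the support of μ₀ up to a countable set; (2) for every non-decreasing convex function φ : [0,∞) → ℝ, T is an optimal transport map for the cost c(s,t) = φ(|s−t|): ∫ φ(|s−T(s)|) μ₀(ds) ≤ ∫ φ(|s−t|) π(ds dt) for every coupling π of (μ₀,μ₁). -/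
set_option linter.unusedVariables false
set_option linter.unusedSectionVars false
set_option maxHeartbeats 1000000

open Set MeasureTheory Filter Topology


-- classification of lower sets in ℝ
lemma lowerCases {E : Set ℝ} (hE : IsLowerSet E) :
    E = ∅ ∨ E = univ ∨ ∃ a : ℝ, E = Iio a ∨ E = Iic a := by
  rcases E.eq_empty_or_nonempty with h | h
  · exact Or.inl h
  by_cases hb : BddAbove E
  · refine Or.inr (Or.inr ⟨sSup E, ?_⟩)
    have h1 : Iio (sSup E) ⊆ E := fun x hx => by
      obtain ⟨y, hy, hxy⟩ := exists_lt_of_lt_csSup h hx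
      exact hE hxy.le hy
    have h2 : E ⊆ Iic (sSup E) := fun x hx => le_csSup hb hx
    by_cases hm : sSup E ∈ E
    · refine Or.inr (Subset.antisymm h2 fun x hx => hE hx hm)
    · refine Or.inl (Subset.antisymm (fun x hx => ?_) h1)
      have hle : x ≤ sSup E := h2 hx
      rcases hle.lt_or_eq with h' | h'
      · exact h'
      · exact absurd (h' ▸ hx) hm
  · refine Or.inr (Or.inl (eq_univ_of_forall fun x => ?_))
    obtain ⟨y, hy, hxy⟩ := not_bddAbove_iff.1 hb x
    exact hE hxy.le hy

lemma lowerMeas {E : Set ℝ} (hE : IsLowerSet E) : MeasurableSet E := by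
  rcases lowerCases hE with h | h | ⟨a, h | h⟩ <;> subst h <;> measurability

lemma iUnion_Iio_seq (a : ℝ) : (⋃ n : ℕ, Iio (a - 1/(n+1))) = Iio a := by
  ext x
  simp only [mem_iUnion, mem_Iio]
  constructor
  · rintro ⟨n, hn⟩
    have : (0:ℝ) < 1/(n+1) := by positivity
    linarith
  · intro hx
    obtain ⟨n, hn⟩ := exists_nat_one_div_lt (sub_pos.2 hx)
    exact ⟨n, by linarith⟩

lemma iInter_Iio_seq (a : ℝ) : (⋂ n : ℕ, Iio (a + 1/(n+1))) = Iic a := by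
  ext x
  simp only [mem_iInter, mem_Iio, mem_Iic]
  constructor
  · intro hx
    by_contra hc
    push_neg at hc
    obtain ⟨n, hn⟩ := exists_nat_one_div_lt (sub_pos.2 hc)
    have := hx n
    linarith
  · intro hx n
    have : (0:ℝ) < 1/(n+1) := by positivity
    linarith

lemma meas_Iio_sup (ν : Measure ℝ) (a : ℝ) :
    ν (Iio a) = ⨆ n : ℕ, ν (Iio (a - 1/(n+1))) := by
  rw [← iUnion_Iio_seq a]
  refine Monotone.measure_iUnion fun m n hmn => Iio_subset_Iio ?_
  have : 1/((n:ℝ)+1) ≤ 1/((m:ℝ)+1) := by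
    apply one_div_le_one_div_of_le (by positivity)
    exact_mod_cast by omega
  linarith

lemma meas_Iic_inf (ν : Measure ℝ) [IsFiniteMeasure ν] (a : ℝ) :
    ν (Iic a) = ⨅ n : ℕ, ν (Iio (a + 1/(n+1))) := by
  rw [← iInter_Iio_seq a]
  refine Antitone.measure_iInter (fun m n hmn => Iio_subset_Iio ?_)
    (fun n => measurableSet_Iio.nullMeasurableSet) ⟨0, measure_ne_top _ _⟩
  have : 1/((n:ℝ)+1) ≤ 1/((m:ℝ)+1) := by
    apply one_div_le_one_div_of_le (by positivity)
    exact_mod_cast by omega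
  linarith

lemma meas_Iio_bot (ν : Measure ℝ) [IsFiniteMeasure ν] :
    (⨅ n : ℕ, ν (Iio (-(n:ℝ)))) = 0 := by
  have h : (⋂ n : ℕ, Iio (-(n:ℝ))) = ∅ := by
    ext x
    simp only [mem_iInter, mem_Iio, mem_empty_iff_false, iff_false, not_forall, not_lt]
    obtain ⟨n, hn⟩ := exists_nat_gt (-x)
    exact ⟨n, by linarith⟩
  have := Antitone.measure_iInter (μ := ν) (s := fun n : ℕ => Iio (-(n:ℝ)))
    (fun m n hmn => Iio_subset_Iio (by exact_mod_cast neg_le_neg (Nat.cast_le.2 hmn)))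
    (fun n => measurableSet_Iio.nullMeasurableSet) ⟨0, measure_ne_top _ _⟩
  rw [h] at this
  simpa using this.symm

lemma meas_Iio_top (ν : Measure ℝ) :
    (⨆ n : ℕ, ν (Iio (n:ℝ))) = ν univ := by
  have h : (⋃ n : ℕ, Iio ((n:ℝ))) = univ := by
    refine eq_univ_of_forall fun x => ?_
    obtain ⟨n, hn⟩ := exists_nat_gt x
    exact mem_iUnion.2 ⟨n, hn⟩
  rw [← h]
  exact (Monotone.measure_iUnion fun m n hmn => Iio_subset_Iio (Nat.cast_le.2 hmn)).symm

-- measure of a "sublevel-type" lower set equals p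
lemma measure_lower (μ : Measure ℝ) [IsProbabilityMeasure μ]
    (hatom : ∀ x : ℝ, μ {x} = 0) {E : Set ℝ} (hE : IsLowerSet E) {p : ENNReal}
    (hp : p ≤ 1) (hin : ∀ s ∈ E, μ (Iio s) ≤ p) (hout : ∀ s ∉ E, p ≤ μ (Iio s)) :
    μ E = p := by
  have hIic : ∀ a : ℝ, μ (Iic a) = μ (Iio a) := by
    intro a
    refine le_antisymm ?_ (measure_mono Iio_subset_Iic_self)
    calc μ (Iic a) ≤ μ (Iio a ∪ {a}) := measure_mono (by
          intro x hx
          rcases lt_or_eq_of_le (mem_Iic.1 hx) with h | h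
          · exact Or.inl h
          · exact Or.inr (by simp [h]))
    _ ≤ μ (Iio a) + μ {a} := measure_union_le _ _
    _ = μ (Iio a) := by rw [hatom a, add_zero]
  rcases lowerCases hE with h | h | ⟨a, h | h⟩
  · subst h
    have : p ≤ ⨅ n : ℕ, μ (Iio (-(n:ℝ))) := le_iInf fun n => hout _ (notMem_empty _)
    rw [meas_Iio_bot μ] at this
    simpa using le_antisymm zero_le this
  · subst h
    have h1 : (⨆ n : ℕ, μ (Iio (n:ℝ))) ≤ p := iSup_le fun n => hin _ (mem_univ _)
    rw [meas_Iio_top μ] at h1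
    have : μ univ = 1 := measure_univ
    rw [this] at h1
    rw [this]
    exact le_antisymm h1 hp
  · subst h
    refine le_antisymm ?_ (hout a (by simp))
    rw [meas_Iio_sup μ a]
    refine iSup_le fun n => hin _ (by
      simp only [mem_Iio]
      have : (0:ℝ) < 1/(n+1) := by positivity
      linarith)
  · subst h
    refine le_antisymm ?_ ?_
    · rw [hIic a, meas_Iio_sup μ a]
      refine iSup_le fun n => hin _ (by
        simp only [mem_Iic]
        have : (0:ℝ) < 1/(n+1) := by positivity
        linarith)
    · rw [meas_Iic_inf μ a]
      refine le_iInf fun n => hout _ (by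
        simp only [mem_Iic, not_le]
        have : (0:ℝ) < 1/(n+1) := by positivity
        linarith)

-- sets with no 3-chain are countable
lemma countable_of_no_three {A : Set ℝ}
    (h : ∀ a ∈ A, ∀ b ∈ A, ∀ c ∈ A, a < b → b < c → False) : A.Countable := by
  rcases A.eq_empty_or_nonempty with hA | ⟨x, hx⟩
  · simp [hA]
  by_cases h2 : ∃ y ∈ A, y ≠ x
  · obtain ⟨y, hy, hyx⟩ := h2
    have hsub : A ⊆ {x, y} := by
      intro z hz
      by_contra hc
      simp only [mem_insert_iff, mem_singleton_iff, not_or] at hc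
      obtain ⟨hzx, hzy⟩ := hc
      have tri : ∀ a ∈ A, ∀ b ∈ A, ∀ c ∈ A, a ≠ b → b ≠ c → a ≠ c → False := by
        intro a ha b hb c hc hab hbc hac
        rcases lt_trichotomy a b with h1 | h1 | h1
        · rcases lt_trichotomy b c with g1 | g1 | g1
          · exact h a ha b hb c hc h1 g1
          · exact hbc g1
          · rcases lt_trichotomy a c with f1 | f1 | f1
            · exact h a ha c hc b hb f1 g1
            · exact hac f1
            · exact h c hc a ha b hb f1 h1
        · exact hab h1
        · rcases lt_trichotomy a c with f1 | f1 | f1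
          · exact h b hb a ha c hc h1 f1
          · exact hac f1
          · rcases lt_trichotomy b c with g1 | g1 | g1
            · exact h b hb c hc a ha g1 f1
            · exact hbc g1
            · exact h c hc b hb a ha g1 h1
      exact tri x hx y hy z hz (Ne.symm hyx) (Ne.symm hzy) (Ne.symm hzx)
    exact ((Set.countable_singleton y).insert x).mono hsub
  · push_neg at h2
    exact (Set.countable_singleton x).mono fun z hz => h2 z hz

-- layer cake identity for the basic cost
lemma cost_layer (ρ : Measure (ℝ × ℝ)) [IsFiniteMeasure ρ] (u : ℝ) :
    ∫⁻ p, ENNReal.ofReal (p.1 - p.2 - u) ∂ρ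
      = ∫⁻ x, ρ {p : ℝ × ℝ | p.2 ≤ x - u ∧ x < p.1} ∂volume := by
  have hA : MeasurableSet {q : (ℝ × ℝ) × ℝ | q.1.2 ≤ q.2 - u ∧ q.2 < q.1.1} := by
    apply MeasurableSet.inter
    · exact measurableSet_le (measurable_snd.comp measurable_fst)
        ((measurable_snd).sub measurable_const)
    · exact measurableSet_lt measurable_snd (measurable_fst.comp measurable_fst)
  have step1 : ∀ p : ℝ × ℝ, ENNReal.ofReal (p.1 - p.2 - u)
      = ∫⁻ x, {q : (ℝ × ℝ) × ℝ | q.1.2 ≤ q.2 - u ∧ q.2 < q.1.1}.indicator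
          (1 : ((ℝ × ℝ) × ℝ) → ENNReal) (p, x) ∂volume := by
    intro p
    have hset : {x : ℝ | (p, x) ∈ {q : (ℝ × ℝ) × ℝ | q.1.2 ≤ q.2 - u ∧ q.2 < q.1.1}}
        = Ico (p.2 + u) p.1 := by
      ext x
      simp only [mem_setOf_eq, mem_Ico]
      constructor
      · rintro ⟨h1, h2⟩; exact ⟨by linarith, h2⟩
      · rintro ⟨h1, h2⟩; exact ⟨by linarith, h2⟩
    have : ∫⁻ x, {q : (ℝ × ℝ) × ℝ | q.1.2 ≤ q.2 - u ∧ q.2 < q.1.1}.indicator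
          (1 : ((ℝ × ℝ) × ℝ) → ENNReal) (p, x) ∂volume
        = ∫⁻ x, (Ico (p.2 + u) p.1).indicator (1 : ℝ → ENNReal) x ∂volume := by
      congr 1
      ext x
      rw [← hset]
      rfl
    rw [this, lintegral_indicator_one measurableSet_Ico, Real.volume_Ico]
    congr 1
    ring
  calc ∫⁻ p, ENNReal.ofReal (p.1 - p.2 - u) ∂ρ
      = ∫⁻ p, ∫⁻ x, {q : (ℝ × ℝ) × ℝ | q.1.2 ≤ q.2 - u ∧ q.2 < q.1.1}.indicator
          (1 : ((ℝ × ℝ) × ℝ) → ENNReal) (p, x) ∂volume ∂ρ := by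
        exact lintegral_congr step1
    _ = ∫⁻ x, ∫⁻ p, {q : (ℝ × ℝ) × ℝ | q.1.2 ≤ q.2 - u ∧ q.2 < q.1.1}.indicator
          (1 : ((ℝ × ℝ) × ℝ) → ENNReal) (p, x) ∂ρ ∂volume := by
        apply lintegral_lintegral_swap
        exact ((measurable_const.indicator hA).comp measurable_id).aemeasurable
    _ = ∫⁻ x, ρ {p : ℝ × ℝ | p.2 ≤ x - u ∧ x < p.1} ∂volume := by
        refine lintegral_congr fun x => ?_
        have hsec : MeasurableSet {p : ℝ × ℝ | p.2 ≤ x - u ∧ x < p.1} := by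
          apply MeasurableSet.inter
          · exact measurableSet_le measurable_snd measurable_const
          · exact measurableSet_lt measurable_const measurable_fst
        have : (fun p : ℝ × ℝ => {q : (ℝ × ℝ) × ℝ | q.1.2 ≤ q.2 - u ∧ q.2 < q.1.1}.indicator
            (1 : ((ℝ × ℝ) × ℝ) → ENNReal) (p, x))
            = {p : ℝ × ℝ | p.2 ≤ x - u ∧ x < p.1}.indicator (1 : (ℝ × ℝ) → ENNReal) := by
          ext p
          simp only [Set.indicator_apply, mem_setOf_eq, Pi.one_apply]
        rw [this, lintegral_indicator_one hsec]

noncomputable def Dr (h : ℝ → ℝ) (v : ℝ) : ℝ :=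
  sInf ((fun w => (h w - h v) / (w - v)) '' Ioi v)

noncomputable def Sj (h : ℝ → ℝ) (δ : ℝ) (j : ℕ) (x : ℝ) : ℝ :=
  Dr h 0 * max x 0 + ∑ k ∈ Finset.range j,
    (Dr h ((k+1)*δ) - Dr h (k*δ)) * max (x - (k+1)*δ) 0

section conv
variable {h : ℝ → ℝ} (hmono : Monotone h) (hneg : ∀ y : ℝ, y ≤ 0 → h y = 0)
  (hsl : ∀ a b c : ℝ, 0 ≤ a → a < b → b < c → (h b - h a)/(b-a) ≤ (h c - h b)/(c-b))

include hmono in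
lemma Dr_bddBelow {v : ℝ} (hv : 0 ≤ v) :
    BddBelow ((fun w => (h w - h v) / (w - v)) '' Ioi v) := by
  refine ⟨0, ?_⟩
  rintro y ⟨w, hw, rfl⟩
  exact div_nonneg (sub_nonneg.2 (hmono (le_of_lt hw))) (sub_nonneg.2 (le_of_lt hw))

include hmono in
lemma Dr_nonneg {v : ℝ} (hv : 0 ≤ v) : 0 ≤ Dr h v := by
  refine le_csInf ⟨_, ⟨v+1, by simp, rfl⟩⟩ ?_
  rintro y ⟨w, hw, rfl⟩
  exact div_nonneg (sub_nonneg.2 (hmono (le_of_lt hw))) (sub_nonneg.2 (le_of_lt hw))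

include hmono in
lemma Dr_le {v w : ℝ} (hv : 0 ≤ v) (hvw : v < w) : Dr h v ≤ (h w - h v) / (w - v) :=
  csInf_le (Dr_bddBelow hmono hv) ⟨w, hvw, rfl⟩

include hmono hsl in
lemma Dr_ge {a b : ℝ} (ha : 0 ≤ a) (hab : a < b) : (h b - h a) / (b - a) ≤ Dr h b := by
  refine le_csInf ⟨_, ⟨b+1, by simp, rfl⟩⟩ ?_
  rintro y ⟨w, hw, rfl⟩
  exact hsl a b w ha hab hw

include hmono in
lemma Dr_support {v w : ℝ} (hv : 0 ≤ v) (hvw : v ≤ w) :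
    h v + Dr h v * (w - v) ≤ h w := by
  rcases eq_or_lt_of_le hvw with rfl | hlt
  · simp
  · have := Dr_le hmono hv hlt
    rw [div_eq_mul_inv] at this
    have h2 : Dr h v * (w - v) ≤ h w - h v := by
      have hpos : (0:ℝ) < w - v := sub_pos.2 hlt
      calc Dr h v * (w - v) ≤ ((h w - h v) * (w - v)⁻¹) * (w - v) :=
            mul_le_mul_of_nonneg_right this hpos.le
        _ = h w - h v := by field_simp
    linarith

include hmono hsl in
lemma Dr_mono {v w : ℝ} (hv : 0 ≤ v) (hvw : v ≤ w) : Dr h v ≤ Dr h w := by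
  rcases eq_or_lt_of_le hvw with rfl | hlt
  · exact le_rfl
  · exact (Dr_le hmono hv hlt).trans (Dr_ge hmono hsl hv hlt)

variable {δ : ℝ} (hδ : 0 < δ)

include hδ in
lemma Sj_zero (j : ℕ) {x : ℝ} (hx : x ≤ 0) : Sj h δ j x = 0 := by
  unfold Sj
  have h1 : max x 0 = 0 := max_eq_right hx
  rw [h1, mul_zero, zero_add]
  refine Finset.sum_eq_zero fun k _ => ?_
  have : x - (k+1)*δ ≤ 0 := by
    have : (0:ℝ) ≤ (k+1)*δ := by positivity
    linarith
  rw [max_eq_right this, mul_zero]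

include hmono hsl hδ in
lemma Sj_coeff_nonneg (k : ℕ) : 0 ≤ Dr h ((k+1)*δ) - Dr h (k*δ) := by
  have := Dr_mono hmono hsl (by positivity : (0:ℝ) ≤ (k:ℝ)*δ)
    (by nlinarith : (k:ℝ)*δ ≤ ((k:ℝ)+1)*δ)
  linarith

include hmono hsl hδ in
lemma Sj_mono (j : ℕ) : Monotone (Sj h δ j) := by
  intro x y hxy
  unfold Sj
  refine add_le_add
    (mul_le_mul_of_nonneg_left (max_le_max hxy le_rfl) (Dr_nonneg hmono le_rfl))
    (Finset.sum_le_sum fun k _ => mul_le_mul_of_nonneg_left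
      (max_le_max (by linarith) le_rfl) (Sj_coeff_nonneg hmono hsl hδ k))

include hmono hsl hδ in
lemma Sj_nonneg (j : ℕ) (x : ℝ) : 0 ≤ Sj h δ j x := by
  rcases le_total x 0 with hx | hx
  · rw [Sj_zero hδ j hx]
  · rw [← Sj_zero hδ j (le_refl 0)]
    exact Sj_mono hmono hsl hδ j hx

include hδ in
lemma Sj_vanish {j m : ℕ} (hm : m ≤ j) {x : ℝ} (hx : x ≤ (m+1)*δ) :
    Sj h δ j x = Sj h δ m x := by
  unfold Sj
  congr 1
  refine (Finset.sum_subset (Finset.range_subset_range.2 hm) fun k hk hk' => ?_).symm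
  simp only [Finset.mem_range, not_lt] at hk hk'
  have : x - (k+1)*δ ≤ 0 := by
    have h1 : ((m:ℝ)+1)*δ ≤ ((k:ℝ)+1)*δ := by
      have : ((m:ℝ)+1) ≤ ((k:ℝ)+1) := by exact_mod_cast by omega
      nlinarith
    linarith
  rw [max_eq_right this, mul_zero]

include hδ in
lemma Sj_eval (j : ℕ) {z : ℝ} (hz : (j:ℝ)*δ ≤ z) :
    Sj h δ j z = Dr h ((j:ℝ)*δ) * z
      - ∑ k ∈ Finset.range j, (Dr h (((k:ℝ)+1)*δ) - Dr h ((k:ℝ)*δ)) * (((k:ℝ)+1)*δ) := by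
  have hj0 : (0:ℝ) ≤ (j:ℝ)*δ := by positivity
  have hz0 : (0:ℝ) ≤ z := le_trans hj0 hz
  have hmax : ∀ k ∈ Finset.range j, max (z - ((k:ℝ)+1)*δ) 0 = z - ((k:ℝ)+1)*δ := by
    intro k hk
    simp only [Finset.mem_range] at hk
    have h1 : ((k:ℝ)+1) ≤ (j:ℝ) := by exact_mod_cast hk
    have : ((k:ℝ)+1)*δ ≤ (j:ℝ)*δ := by nlinarith
    exact max_eq_left (by linarith)
  have tele : (∑ k ∈ Finset.range j, (Dr h (((k:ℝ)+1)*δ) - Dr h ((k:ℝ)*δ)))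
      = Dr h ((j:ℝ)*δ) - Dr h 0 := by
    have h1 := Finset.sum_range_sub (fun k : ℕ => Dr h ((k:ℝ)*δ)) j
    simp only [Nat.cast_add, Nat.cast_one, Nat.cast_zero, zero_mul] at h1
    exact h1
  unfold Sj
  rw [max_eq_left hz0]
  have hsum : (∑ k ∈ Finset.range j, (Dr h (((k:ℝ)+1)*δ) - Dr h ((k:ℝ)*δ)) * max (z - ((k:ℝ)+1)*δ) 0)
      = ∑ k ∈ Finset.range j, ((Dr h (((k:ℝ)+1)*δ) - Dr h ((k:ℝ)*δ)) * z
        - (Dr h (((k:ℝ)+1)*δ) - Dr h ((k:ℝ)*δ)) * (((k:ℝ)+1)*δ)) := by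
    refine Finset.sum_congr rfl fun k hk => ?_
    rw [hmax k hk]; ring
  rw [hsum, Finset.sum_sub_distrib, ← Finset.sum_mul, tele]
  ring

include hmono hneg hsl hδ in
lemma Sj_tangent (j : ℕ) : ∀ {x : ℝ}, (j:ℝ)*δ ≤ x →
    Sj h δ j x ≤ h ((j:ℝ)*δ) + Dr h ((j:ℝ)*δ) * (x - (j:ℝ)*δ) := by
  induction j with
  | zero =>
    intro x hx
    simp only [Nat.cast_zero, zero_mul] at hx ⊢
    rw [Sj_eval hδ 0 (by simpa using hx)]
    simp [hneg 0 le_rfl]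
  | succ j ih =>
    intro x hx
    have hj1 : ((j:ℝ)+1)*δ ≤ x := by push_cast at hx; linarith
    have hjx : (j:ℝ)*δ ≤ x := by nlinarith [hδ.le]
    have hstep : Sj h δ (j+1) x = Sj h δ j x
        + (Dr h (((j:ℝ)+1)*δ) - Dr h ((j:ℝ)*δ)) * (x - ((j:ℝ)+1)*δ) := by
      have hmx : max (x - ((j:ℝ)+1)*δ) 0 = x - ((j:ℝ)+1)*δ := max_eq_left (by linarith)
      unfold Sj
      rw [Finset.sum_range_succ, hmx]
      push_cast
      ring
    have hsupp : h ((j:ℝ)*δ) + Dr h ((j:ℝ)*δ) * δ ≤ h (((j:ℝ)+1)*δ) := by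
      have := Dr_support hmono (by positivity : (0:ℝ) ≤ (j:ℝ)*δ)
        (by nlinarith : (j:ℝ)*δ ≤ ((j:ℝ)+1)*δ)
      have heq : ((j:ℝ)+1)*δ - (j:ℝ)*δ = δ := by ring
      rw [heq] at this
      exact this
    have hD1 : 0 ≤ Dr h (((j:ℝ)+1)*δ) - Dr h ((j:ℝ)*δ) := Sj_coeff_nonneg hmono hsl hδ j
    calc Sj h δ (j+1) x
        = Sj h δ j x + (Dr h (((j:ℝ)+1)*δ) - Dr h ((j:ℝ)*δ)) * (x - ((j:ℝ)+1)*δ) := hstep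
      _ ≤ (h ((j:ℝ)*δ) + Dr h ((j:ℝ)*δ) * (x - (j:ℝ)*δ))
          + (Dr h (((j:ℝ)+1)*δ) - Dr h ((j:ℝ)*δ)) * (x - ((j:ℝ)+1)*δ) := by
          have := ih hjx
          linarith
      _ = (h ((j:ℝ)*δ) + Dr h ((j:ℝ)*δ) * δ) + Dr h (((j:ℝ)+1)*δ) * (x - ((j:ℝ)+1)*δ) := by
          ring
      _ ≤ h (((j:ℝ)+1)*δ) + Dr h (((j:ℝ)+1)*δ) * (x - ((j:ℝ)+1)*δ) := by linarith
      _ = h ((((j:ℕ)+1:ℕ):ℝ)*δ) + Dr h ((((j:ℕ)+1:ℕ):ℝ)*δ) * (x - (((j:ℕ)+1:ℕ):ℝ)*δ) := by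
          push_cast; ring_nf

include hmono hneg hsl hδ in
lemma Sj_minor_ge (j : ℕ) {x : ℝ} (hx : (j:ℝ)*δ ≤ x) : Sj h δ j x ≤ h x := by
  refine (Sj_tangent hmono hneg hsl hδ j hx).trans ?_
  have := Dr_support hmono (by positivity : (0:ℝ) ≤ (j:ℝ)*δ) hx
  linarith

include hmono hneg hsl hδ in
lemma Sj_minor (j : ℕ) (x : ℝ) : Sj h δ j x ≤ h x := by
  rcases le_total x 0 with hx | hx
  · rw [Sj_zero hδ j hx, hneg x hx]
  · set m : ℕ := min j ⌊x / δ⌋₊ with hm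
    have hmj : m ≤ j := min_le_left _ _
    have hmδ : (m:ℝ)*δ ≤ x := by
      have h1 : (m:ℝ) ≤ ⌊x / δ⌋₊ := by exact_mod_cast min_le_right j _
      have h2 : (⌊x / δ⌋₊ : ℝ) ≤ x / δ := Nat.floor_le (by positivity)
      calc (m:ℝ)*δ ≤ (x/δ)*δ := by nlinarith
        _ = x := by field_simp
    by_cases hcase : ⌊x / δ⌋₊ < j
    · have hmfl : m = ⌊x / δ⌋₊ := min_eq_right hcase.le
      have hxm : x ≤ ((m:ℝ)+1)*δ := by
        have := Nat.lt_floor_add_one (x / δ)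
        rw [← hmfl] at this
        calc x = (x/δ)*δ := by field_simp
          _ ≤ ((m:ℝ)+1)*δ := by nlinarith
      rw [Sj_vanish hδ hmj hxm]
      exact Sj_minor_ge hmono hneg hsl hδ m hmδ
    · have hmj' : m = j := min_eq_left (le_of_not_gt hcase)
      rw [hmj'] at hmδ
      exact Sj_minor_ge hmono hneg hsl hδ j hmδ

include hmono hneg hsl hδ in
lemma Sj_lower_grid : ∀ j : ℕ, h ((j:ℝ)*δ) ≤ Sj h δ j (((j:ℝ)+1)*δ) := by
  intro j
  induction j with
  | zero =>
    simp only [Nat.cast_zero, zero_mul, zero_add, one_mul]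
    rw [hneg 0 le_rfl, Sj_eval hδ 0 (by simp [hδ.le])]
    simp only [Finset.range_zero, Finset.sum_empty, Nat.cast_zero, zero_mul, sub_zero]
    have := Dr_nonneg hmono (le_refl (0:ℝ))
    nlinarith
  | succ j ih =>
    have e1 : Sj h δ (j+1) (((j:ℝ)+1)*δ) = Sj h δ j (((j:ℝ)+1)*δ) :=
      Sj_vanish hδ (Nat.le_succ j) le_rfl
    have hc : (((j:ℕ)+1:ℕ):ℝ) = (j:ℝ)+1 := by push_cast; ring
    have e2 : Sj h δ (j+1) ((((j:ℝ)+1)+1)*δ) - Sj h δ (j+1) (((j:ℝ)+1)*δ)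
        = Dr h (((j:ℝ)+1)*δ) * δ := by
      rw [Sj_eval hδ (j+1) (by rw [hc]; nlinarith [hδ.le]),
          Sj_eval hδ (j+1) (by rw [hc])]
      rw [hc]
      ring
    have hge : h (((j:ℝ)+1)*δ) - h ((j:ℝ)*δ) ≤ Dr h (((j:ℝ)+1)*δ) * δ := by
      have hsl2 := Dr_ge hmono hsl (by positivity : (0:ℝ) ≤ (j:ℝ)*δ)
        (by nlinarith : (j:ℝ)*δ < ((j:ℝ)+1)*δ)
      have heq : ((j:ℝ)+1)*δ - (j:ℝ)*δ = δ := by ring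
      rw [heq] at hsl2
      calc h (((j:ℝ)+1)*δ) - h ((j:ℝ)*δ)
          = ((h (((j:ℝ)+1)*δ) - h ((j:ℝ)*δ)) / δ) * δ := by field_simp
        _ ≤ Dr h (((j:ℝ)+1)*δ) * δ := mul_le_mul_of_nonneg_right hsl2 hδ.le
    have := ih
    push_cast at e1 e2 ⊢
    linarith

include hmono hneg hsl hδ in
lemma Sj_lower (j : ℕ) {x : ℝ} (hx : 0 ≤ x) (hxj : x ≤ (j:ℝ)*δ) :
    h (max (x - 2*δ) 0) ≤ Sj h δ j x := by
  set m : ℕ := ⌊x / δ⌋₊ with hm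
  rcases Nat.eq_zero_or_pos m with hm0 | hmpos
  · have : max (x - 2*δ) 0 = 0 ∨ x - 2*δ ≤ 0 := by
      right
      have := Nat.lt_floor_add_one (x / δ)
      rw [← hm, hm0] at this
      have h2 : x / δ < 1 := by simpa using this
      have h3 : x < δ := by
        have := (div_lt_one hδ).1 h2
        linarith
      linarith [hδ.le]
    have h2 : h (max (x - 2*δ) 0) = 0 := by
      rcases this with h' | h'
      · rw [h']; exact hneg 0 le_rfl
      · exact hneg _ (max_le h' le_rfl)
    rw [h2]
    exact Sj_nonneg hmono hsl hδ j x
  · have hmx : (m:ℝ)*δ ≤ x := by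
      have h2 : (⌊x / δ⌋₊ : ℝ) ≤ x / δ := Nat.floor_le (by positivity)
      calc (m:ℝ)*δ ≤ (x/δ)*δ := by rw [hm]; nlinarith
        _ = x := by field_simp
    have hmj : m ≤ j := by
      have hdle : x / δ ≤ (j:ℝ) := (div_le_iff₀ hδ).2 (by nlinarith)
      calc m = ⌊x/δ⌋₊ := hm
        _ ≤ ⌊((j:ℕ):ℝ)⌋₊ := Nat.floor_mono hdle
        _ = j := Nat.floor_natCast j
    have hstep1 : Sj h δ j ((m:ℝ)*δ) ≤ Sj h δ j x := Sj_mono hmono hsl hδ j hmx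
    have hcast : ((((m:ℕ)-1:ℕ)):ℝ) + 1 = (m:ℝ) := by
      push_cast [Nat.cast_sub (by omega : 1 ≤ m)]
      ring
    have hstep2 : Sj h δ j ((m:ℝ)*δ) = Sj h δ (m-1) ((m:ℝ)*δ) := by
      refine Sj_vanish hδ (le_trans (Nat.sub_le m 1) hmj) ?_
      rw [hcast]
    have hstep3 : h ((((m:ℕ)-1:ℕ):ℝ)*δ) ≤ Sj h δ (m-1) ((m:ℝ)*δ) := by
      have := Sj_lower_grid hmono hneg hsl hδ (m-1)
      rw [hcast] at this
      exact this
    have hfinal : h (max (x - 2*δ) 0) ≤ h ((((m:ℕ)-1:ℕ):ℝ)*δ) := by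
      apply hmono
      apply max_le
      · have hxlt : x < ((m:ℝ)+1)*δ := by
          have := Nat.lt_floor_add_one (x / δ)
          rw [← hm] at this
          calc x = (x/δ)*δ := by field_simp
            _ < ((m:ℝ)+1)*δ := by nlinarith
        have hc2 : (((m:ℕ)-1:ℕ):ℝ) = (m:ℝ) - 1 := by linarith [hcast]
        rw [hc2]
        nlinarith
      · positivity
    exact hfinal.trans (hstep3.trans (hstep2 ▸ hstep1))

include hmono hneg hsl in
lemma S_tendsto {x : ℝ} (hx : 0 ≤ x) :
    Tendsto (fun n : ℕ => Sj h ((1/2)^n) (n * 2^n) x) atTop (𝓝 (h x)) := by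
  set C := h (x+1) - h x with hC
  have hC0 : 0 ≤ C := sub_nonneg.2 (hmono (by linarith))
  have hkey : ∀ y : ℝ, 0 ≤ y → y ≤ x → h x - h y ≤ C * (x - y) := by
    intro y hy hyx
    rcases eq_or_lt_of_le hyx with rfl | hlt
    · simp
    · have h1 := hsl y x (x+1) hy hlt (by linarith)
      have h3 : (x+1) - x = 1 := by ring
      rw [h3, div_one] at h1
      have hpos : (0:ℝ) < x - y := sub_pos.2 hlt
      calc h x - h y = ((h x - h y)/(x-y))*(x-y) := by field_simp
        _ ≤ C*(x-y) := mul_le_mul_of_nonneg_right h1 hpos.le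
  have hδn : ∀ n : ℕ, (0:ℝ) < (1/2)^n := fun n => by positivity
  have hub : ∀ n : ℕ, Sj h ((1/2)^n) (n*2^n) x ≤ h x :=
    fun n => Sj_minor hmono hneg hsl (hδn n) _ x
  have hKδ : ∀ n : ℕ, ((n*2^n : ℕ):ℝ) * (1/2)^n = n := by
    intro n
    push_cast
    rw [mul_assoc, show (2:ℝ)^n * (1/2)^n = 1 from by rw [← mul_pow]; norm_num]
    ring
  have hlb : ∀ n : ℕ, x ≤ (n:ℝ) → h x - C * (2*(1/2)^n) ≤ Sj h ((1/2)^n) (n*2^n) x := by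
    intro n hxn
    have h1 := Sj_lower hmono hneg hsl (hδn n) (n*2^n) hx (by rw [hKδ n]; exact hxn)
    set y := max (x - 2*(1/2)^n) 0 with hy
    have hy0 : (0:ℝ) ≤ y := le_max_right _ _
    have hyx : y ≤ x := max_le (by linarith [le_of_lt (hδn n)]) hx
    have h2 : x - y ≤ 2*(1/2)^n := by
      have : x - 2*(1/2)^n ≤ y := le_max_left _ _
      linarith
    have h4 := hkey y hy0 hyx
    nlinarith
  have hδ0 : Tendsto (fun n : ℕ => (1/2:ℝ)^n) atTop (𝓝 0) :=
    tendsto_pow_atTop_nhds_zero_of_lt_one (by norm_num) (by norm_num)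
  have hlow : Tendsto (fun n : ℕ => h x - C*(2*(1/2)^n)) atTop (𝓝 (h x)) := by
    have h5 : Tendsto (fun n : ℕ => C*(2*(1/2)^n)) atTop (𝓝 (C*(2*0))) :=
      (hδ0.const_mul 2).const_mul C
    rw [mul_zero, mul_zero] at h5
    simpa using tendsto_const_nhds.sub h5
  refine tendsto_of_tendsto_of_tendsto_of_le_of_le' hlow tendsto_const_nhds ?_ ?_
  · filter_upwards [eventually_ge_atTop ⌈x⌉₊] with n hn
    exact hlb n (le_trans (Nat.le_ceil x) (by exact_mod_cast hn))
  · filter_upwards with n using hub n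
end conv


lemma ofReal_max0 (x : ℝ) : ENNReal.ofReal (max x 0) = ENNReal.ofReal x := by
  rcases le_total x 0 with h | h
  · rw [max_eq_right h, ENNReal.ofReal_zero, ENNReal.ofReal_of_nonpos h]
  · rw [max_eq_left h]

lemma Sj_continuous (h : ℝ → ℝ) (δ : ℝ) (j : ℕ) : Continuous (Sj h δ j) := by
  unfold Sj
  refine Continuous.add (continuous_const.mul (continuous_id.max continuous_const)) ?_
  exact continuous_finset_sum _ fun k _ => continuous_const.mul
    ((continuous_id.sub continuous_const).max continuous_const)

section conv2
variable {h : ℝ → ℝ} (hmono : Monotone h) (hneg : ∀ y : ℝ, y ≤ 0 → h y = 0)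
  (hsl : ∀ a b c : ℝ, 0 ≤ a → a < b → b < c → (h b - h a)/(b-a) ≤ (h c - h b)/(c-b))
  {δ : ℝ} (hδ : 0 < δ)

include hmono hneg hsl hδ in
lemma ofReal_Sj (j : ℕ) (x : ℝ) :
    ENNReal.ofReal (Sj h δ j x) = ENNReal.ofReal (Dr h 0) * ENNReal.ofReal (x - 0)
      + ∑ k ∈ Finset.range j, ENNReal.ofReal (Dr h (((k:ℝ)+1)*δ) - Dr h ((k:ℝ)*δ))
        * ENNReal.ofReal (x - ((k:ℝ)+1)*δ) := by
  unfold Sj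
  rw [ENNReal.ofReal_add (mul_nonneg (Dr_nonneg hmono le_rfl) (le_max_right x 0))
    (Finset.sum_nonneg fun k _ => mul_nonneg (Sj_coeff_nonneg hmono hsl hδ k)
      (le_max_right _ 0))]
  congr 1
  · rw [ENNReal.ofReal_mul (Dr_nonneg hmono le_rfl), ofReal_max0, sub_zero]
  · rw [ENNReal.ofReal_sum_of_nonneg fun k _ => mul_nonneg (Sj_coeff_nonneg hmono hsl hδ k)
      (le_max_right _ 0)]
    exact Finset.sum_congr rfl fun k _ => by
      rw [ENNReal.ofReal_mul (Sj_coeff_nonneg hmono hsl hδ k), ofReal_max0]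
end conv2

theorem stmt18
    (μ₀ μ₁ : Measure ℝ) [IsProbabilityMeasure μ₀] [IsProbabilityMeasure μ₁]
    (hatomless : ∀ x : ℝ, μ₀ {x} = 0)
    (H : ℝ → ENNReal) (hH : ∀ s, H s = μ₀ (Set.Iio s))
    (F : ℝ → ENNReal) (hF : ∀ t, F t = μ₁ (Set.Iio t))
    (T : ℝ → EReal)
    (hT : ∀ s, T s = sSup {u : EReal | ∃ t : ℝ, u = (t : EReal) ∧ F t ≤ H s}) :
    -- (1) `T` is non-decreasing, `μ₀`-a.e. real valued, pushes `μ₀` to `μ₁`,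
    -- and is a.e. unique among non-decreasing transport maps on `supp μ₀`.
    (Monotone T ∧
      (∀ᵐ s ∂μ₀, T s ≠ ⊤ ∧ T s ≠ ⊥) ∧
      μ₀.map (fun s => (T s).toReal) = μ₁ ∧
      (∀ T' : ℝ → ℝ, Monotone T' → μ₀.map T' = μ₁ →
        {s : ℝ | (∀ ε > (0:ℝ), 0 < μ₀ (Metric.ball s ε)) ∧
          ((T' s : EReal) ≠ T s)}.Countable)) ∧
    -- (2) `T` is optimal for every cost `c(s,t) = φc(|s-t|)` with `φc` non-decreasing
    -- and convex on `[0,∞)`.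
    (∀ φc : ℝ → ℝ, MonotoneOn φc (Set.Ici 0) → ConvexOn ℝ (Set.Ici 0) φc →
      ∀ π : Measure (ℝ × ℝ), IsProbabilityMeasure π →
        π.map Prod.fst = μ₀ → π.map Prod.snd = μ₁ →
        ∫⁻ s, ENNReal.ofReal (φc |s - (T s).toReal| - φc 0) ∂μ₀ ≤
          ∫⁻ p, ENNReal.ofReal (φc |p.1 - p.2| - φc 0) ∂π) := by
  have hHmono : Monotone H := fun a b hab => by
    rw [hH, hH]; exact measure_mono (Iio_subset_Iio hab)
  have hFmono : Monotone F := fun a b hab => by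
    rw [hF, hF]; exact measure_mono (Iio_subset_Iio hab)
  have hF1 : ∀ t, F t ≤ 1 := fun t => by rw [hF]; exact prob_le_one
  have hH1 : ∀ s, H s ≤ 1 := fun s => by rw [hH]; exact prob_le_one
  have key : ∀ s t : ℝ, ((t : EReal) ≤ T s ↔ F t ≤ H s) := by
    intro s t
    rw [hT s]
    constructor
    · intro hle
      have hall : ∀ t' : ℝ, t' < t → F t' ≤ H s := by
        intro t' ht'
        have hlt : (t' : EReal) < sSup {u : EReal | ∃ t0 : ℝ, u = (t0:EReal) ∧ F t0 ≤ H s} :=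
          lt_of_lt_of_le (by exact_mod_cast ht') hle
        obtain ⟨u, hu, hltu⟩ := lt_sSup_iff.1 hlt
        obtain ⟨t0, rfl, ht0⟩ := hu
        have : t' < t0 := by exact_mod_cast hltu
        exact le_trans (hFmono this.le) ht0
      rw [hF, meas_Iio_sup μ₁ t]
      refine iSup_le fun n => ?_
      have h1 := hall (t - 1/(n+1)) (by
        have : (0:ℝ) < 1/(n+1) := by positivity
        linarith)
      rw [hF] at h1
      exact h1
    · intro hFH
      exact le_sSup ⟨t, rfl, hFH⟩
  have hTmono : Monotone T := by
    intro a b hab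
    rw [hT a, hT b]
    refine sSup_le_sSup fun u hu => ?_
    obtain ⟨t0, rfl, h0⟩ := hu
    exact ⟨t0, rfl, le_trans h0 (hHmono hab)⟩
  have hTmeas : Measurable T := hTmono.measurable
  have hTrmeas : Measurable (fun s => (T s).toReal) := measurable_ereal_toReal.comp hTmeas
  have hEplt : ∀ p : ENNReal, p ≤ 1 → μ₀ {s : ℝ | H s < p} = p := by
    intro p hp
    refine measure_lower μ₀ hatomless (fun a b hab hbmem => lt_of_le_of_lt (hHmono hab) hbmem)
      hp (fun s hs => ?_) (fun s hs => ?_)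
    · rw [← hH]; exact (le_of_lt hs)
    · rw [← hH]; exact le_of_not_gt hs
  have hEple : ∀ p : ENNReal, p ≤ 1 → μ₀ {s : ℝ | H s ≤ p} = p := by
    intro p hp
    refine measure_lower μ₀ hatomless (fun a b hab hbmem => le_trans (hHmono hab) hbmem)
      hp (fun s hs => ?_) (fun s hs => ?_)
    · rw [← hH]; exact hs
    · rw [← hH]; exact le_of_lt (lt_of_not_ge hs)
  have hNbot : μ₀ {s : ℝ | T s = ⊥} = 0 := by
    have hsub : {s : ℝ | T s = ⊥} ⊆ {s : ℝ | H s ≤ 0} := by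
      intro s hs
      simp only [mem_setOf_eq] at hs ⊢
      have hlt : ∀ t : ℝ, H s < F t := by
        intro t
        by_contra hc
        push_neg at hc
        have h2 := (key s t).2 hc
        rw [hs] at h2
        exact absurd h2 (by simp)
      have h3 : H s ≤ ⨅ n : ℕ, F (-(n:ℝ)) := le_iInf fun n => (hlt _).le
      have h4 : (⨅ n : ℕ, F (-(n:ℝ))) = 0 := by
        rw [show (fun n : ℕ => F (-(n:ℝ))) = fun n : ℕ => μ₁ (Iio (-(n:ℝ))) from
          funext fun n => hF _]
        exact meas_Iio_bot μ₁
      rw [h4] at h3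
      exact h3
    refine measure_mono_null hsub ?_
    exact hEple 0 zero_le
  have hNtop : μ₀ {s : ℝ | T s = ⊤} = 0 := by
    have hsub : {s : ℝ | T s = ⊤} ⊆ {s : ℝ | H s < 1}ᶜ := by
      intro s hs
      simp only [mem_setOf_eq, mem_compl_iff, not_lt] at hs ⊢
      have hall : ∀ t : ℝ, F t ≤ H s := fun t => (key s t).1 (by rw [hs]; exact le_top)
      have h3 : (⨆ n : ℕ, F ((n:ℝ))) ≤ H s := iSup_le fun n => hall _
      have h4 : (⨆ n : ℕ, F ((n:ℝ))) = 1 := by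
        rw [show (fun n : ℕ => F ((n:ℝ))) = fun n : ℕ => μ₁ (Iio ((n:ℝ))) from
          funext fun n => hF _]
        rw [meas_Iio_top μ₁]
        exact measure_univ
      rw [h4] at h3
      exact h3
    refine measure_mono_null hsub ?_
    have hmeas : MeasurableSet {s : ℝ | H s < 1} :=
      lowerMeas (fun a b hab hbmem => lt_of_le_of_lt (hHmono hab) hbmem)
    rw [measure_compl hmeas (measure_ne_top _ _), hEplt 1 le_rfl, measure_univ, tsub_self]
  have haereal : ∀ᵐ s ∂μ₀, T s ≠ ⊤ ∧ T s ≠ ⊥ := by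
    have h1 : μ₀ ({s : ℝ | T s = ⊤} ∪ {s : ℝ | T s = ⊥}) = 0 := measure_union_null hNtop hNbot
    rw [MeasureTheory.ae_iff]
    refine measure_mono_null (fun s hs => ?_) h1
    simp only [mem_setOf_eq, not_and_or, not_not] at hs
    exact hs
  have hIioTr : ∀ t : ℝ, μ₀ {s : ℝ | (T s).toReal < t} = μ₁ (Iio t) := by
    intro t
    have h1 : {s : ℝ | T s < (t:EReal)} = {s : ℝ | H s < F t} := by
      ext s
      simp only [mem_setOf_eq]
      rw [← not_le, ← not_le, key s t]
    have h2 : μ₀ {s : ℝ | T s < (t:EReal)} = F t := by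
      rw [h1]; exact hEplt (F t) (hF1 t)
    have h3 : {s : ℝ | (T s).toReal < t} =ᵐ[μ₀] {s : ℝ | T s < (t:EReal)} := by
      rw [eventuallyEq_set]
      filter_upwards [haereal] with s hs
      show (T s).toReal < t ↔ T s < (t:EReal)
      rw [← EReal.coe_toReal hs.1 hs.2, EReal.coe_lt_coe_iff]
      rw [EReal.coe_toReal hs.1 hs.2]
    rw [measure_congr h3, h2, hF t]
  have hmap : μ₀.map (fun s => (T s).toReal) = μ₁ := by
    refine Measure.ext_of_Iic (μ₀.map _) μ₁ fun t => ?_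
    rw [Measure.map_apply hTrmeas measurableSet_Iic]
    have hpre : (fun s => (T s).toReal) ⁻¹' (Iic t)
        = ⋂ n : ℕ, {s : ℝ | (T s).toReal < t + 1/(n+1)} := by
      rw [← iInter_Iio_seq t, preimage_iInter]
      rfl
    rw [hpre]
    have hantitone : Antitone fun n : ℕ => {s : ℝ | (T s).toReal < t + 1/(n+1)} := by
      intro m n hmn s hs
      simp only [mem_setOf_eq] at hs ⊢
      have : 1/((n:ℝ)+1) ≤ 1/((m:ℝ)+1) := by
        apply one_div_le_one_div_of_le (by positivity)
        exact_mod_cast by omega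
      linarith
    rw [Antitone.measure_iInter hantitone (fun n =>
      ((hTrmeas measurableSet_Iio).nullMeasurableSet)) ⟨0, measure_ne_top _ _⟩]
    have : ∀ n : ℕ, μ₀ {s : ℝ | (T s).toReal < t + 1/(n+1)} = μ₁ (Iio (t + 1/(n+1))) :=
      fun n => hIioTr _
    rw [iInf_congr this, ← meas_Iic_inf μ₁ t]
  have huniq : ∀ T' : ℝ → ℝ, Monotone T' → μ₀.map T' = μ₁ →
      {s : ℝ | (∀ ε > (0:ℝ), 0 < μ₀ (Metric.ball s ε)) ∧ ((T' s : EReal) ≠ T s)}.Countable := by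
    intro T' hT'mono hT'map
    have hT'meas : Measurable T' := hT'mono.measurable
    have hFle : ∀ s, F (T' s) ≤ H s := by
      intro s
      rw [hF, ← hT'map, Measure.map_apply hT'meas measurableSet_Iio, hH]
      refine measure_mono fun u hu => ?_
      simp only [mem_preimage, mem_Iio] at hu ⊢
      by_contra hc
      push_neg at hc
      exact absurd (hT'mono hc) (not_le.2 hu)
    have hle : ∀ s, (T' s : EReal) ≤ T s := fun s => (key s (T' s)).2 (hFle s)
    set S := {s : ℝ | (∀ ε > (0:ℝ), 0 < μ₀ (Metric.ball s ε)) ∧ ((T' s : EReal) ≠ T s)} with hSdef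
    have hq : ∀ s ∈ S, ∃ q : ℚ, (T' s : ℝ) < (q:ℝ) ∧ F (q:ℝ) ≤ H s := by
      intro s hs
      have hlt : (T' s : EReal) < T s := lt_of_le_of_ne (hle s) hs.2
      by_cases htop : T s = ⊤
      · obtain ⟨q, hq⟩ := exists_rat_gt (T' s)
        exact ⟨q, hq, (key s q).1 (by rw [htop]; exact le_top)⟩
      · have hbot : T s ≠ ⊥ := fun hc => by rw [hc] at hlt; exact absurd hlt (by simp)
        have hTr : T s = (((T s).toReal : ℝ) : EReal) := (EReal.coe_toReal htop hbot).symm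
        rw [hTr] at hlt
        have hlt' : T' s < (T s).toReal := by exact_mod_cast hlt
        obtain ⟨q, hq1, hq2⟩ := exists_rat_btwn hlt'
        refine ⟨q, hq1, (key s q).1 ?_⟩
        rw [hTr]
        exact_mod_cast hq2.le
    classical
    choose! f hf1 hf2 using hq
    have hcover : S ⊆ ⋃ q : ℚ, {s | s ∈ S ∧ f s = q} :=
      fun s hs => mem_iUnion.2 ⟨f s, hs, rfl⟩
    refine Set.Countable.mono hcover (Set.countable_iUnion fun q => countable_of_no_three ?_)
    intro a ha b hb c hc hab hbc
    obtain ⟨haS, haq⟩ := ha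
    obtain ⟨hbS, hbq⟩ := hb
    obtain ⟨hcS, hcq⟩ := hc
    have h1 : F (q:ℝ) ≤ μ₀ (Iio a) := by
      have := hf2 a haS
      rw [haq, hH] at this
      exact this
    have h2 : μ₀ (Iic c) ≤ F (q:ℝ) := by
      rw [hF, ← hT'map, Measure.map_apply hT'meas measurableSet_Iio]
      refine measure_mono fun u hu => ?_
      simp only [mem_Iic] at hu
      simp only [mem_preimage, mem_Iio]
      calc T' u ≤ T' c := hT'mono hu
        _ < (q:ℝ) := by rw [← hcq]; exact hf1 c hcS
    have h3 : μ₀ (Iic c) ≤ μ₀ (Iio a) := h2.trans h1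
    have h4 : μ₀ (Iio a) + μ₀ (Icc a c) = μ₀ (Iic c) := by
      have huni : Iio a ∪ Icc a c = Iic c := by
        ext x
        simp only [mem_union, mem_Iio, mem_Icc, mem_Iic]
        constructor
        · rintro (h | ⟨h5, h6⟩)
          · linarith
          · exact h6
        · intro h5
          rcases lt_or_ge x a with h6 | h6
          · exact Or.inl h6
          · exact Or.inr ⟨h6, h5⟩
      have hdisj : Disjoint (Iio a) (Icc a c) := by
        rw [Set.disjoint_left]
        intro x hx hx2
        exact absurd hx2.1 (not_le.2 hx)
      rw [← huni]
      exact (measure_union hdisj measurableSet_Icc).symm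
    have h5 : μ₀ (Icc a c) = 0 := by
      by_contra hc0
      have h6 : μ₀ (Iio a) < μ₀ (Iio a) + μ₀ (Icc a c) :=
        ENNReal.lt_add_right (measure_ne_top _ _) hc0
      rw [h4] at h6
      exact absurd h3 (not_le.2 h6)
    have hball := hbS.1 (min (b-a) (c-b)) (lt_min (by linarith) (by linarith))
    have hsub : Metric.ball b (min (b-a) (c-b)) ⊆ Icc a c := by
      intro y hy
      rw [Metric.mem_ball, Real.dist_eq] at hy
      have h6 : |y - b| < b - a := lt_of_lt_of_le hy (min_le_left _ _)
      have h7 : |y - b| < c - b := lt_of_lt_of_le hy (min_le_right _ _)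
      rw [abs_lt] at h6
      rw [abs_lt] at h7
      constructor <;> linarith
    exact hball.ne' (measure_mono_null hsub h5)
  refine ⟨⟨hTmono, haereal, hmap, huniq⟩, ?_⟩
  intro φc hφmono hφconv π hπprob hπ1 hπ2
  classical
  set Tr : ℝ → ℝ := fun s => (T s).toReal with hTrdef
  have hTrm : Measurable Tr := hTrmeas
  set π₀ : Measure (ℝ × ℝ) := μ₀.map (fun s => (s, Tr s)) with hπ₀def
  have hgm : Measurable (fun s : ℝ => (s, Tr s)) := measurable_id.prodMk hTrm
  haveI : IsProbabilityMeasure π₀ := Measure.isProbabilityMeasure_map hgm.aemeasurable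
  -- section computations for the monotone coupling
  have hLlow : ∀ v : ℝ, IsLowerSet {s : ℝ | T s ≤ ((v : ℝ) : EReal)} :=
    fun v a b hab ha => le_trans (hTmono hab) ha
  have hALae : ∀ v : ℝ, (Tr ⁻¹' (Iic v)) =ᵐ[μ₀] {s : ℝ | T s ≤ ((v : ℝ) : EReal)} := by
    intro v
    rw [eventuallyEq_set]
    filter_upwards [haereal] with s hs
    show Tr s ≤ v ↔ T s ≤ (v : EReal)
    constructor
    · intro h1
      rw [← EReal.coe_toReal hs.1 hs.2]
      exact_mod_cast h1
    · intro h1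
      rw [← EReal.coe_toReal hs.1 hs.2] at h1
      exact_mod_cast h1
  have hmuA : ∀ v : ℝ, μ₀ (Tr ⁻¹' (Iic v)) = μ₁ (Iic v) := by
    intro v
    have h1 : (μ₀.map Tr) (Iic v) = μ₀ (Tr ⁻¹' (Iic v)) :=
      Measure.map_apply hTrm measurableSet_Iic
    rw [hmap] at h1
    exact h1.symm
  have hmuL : ∀ v : ℝ, μ₀ {s : ℝ | T s ≤ ((v : ℝ) : EReal)} = μ₁ (Iic v) := by
    intro v
    rw [← measure_congr (hALae v)]
    exact hmuA v
  -- min formula : intersection of Tr-sublevel with Iic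
  have hminIic : ∀ v x : ℝ, μ₀ (Tr ⁻¹' (Iic v) ∩ Iic x) = min (μ₁ (Iic v)) (μ₀ (Iic x)) := by
    intro v x
    have h1 : μ₀ (Tr ⁻¹' (Iic v) ∩ Iic x) = μ₀ ({s : ℝ | T s ≤ ((v : ℝ) : EReal)} ∩ Iic x) := by
      refine measure_congr ?_
      rw [eventuallyEq_set]
      have := eventuallyEq_set.1 (hALae v)
      filter_upwards [this] with s hs
      simp only [mem_inter_iff]
      rw [hs]
      simp only [mem_setOf_eq]
    rcases (hLlow v).total (isLowerSet_Iic x) with hsub | hsub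
    · rw [h1, inter_eq_self_of_subset_left hsub, hmuL v,
        min_eq_left ((hmuL v).symm.le.trans (measure_mono hsub))]
    · rw [h1, inter_eq_self_of_subset_right hsub,
        min_eq_right (le_trans (measure_mono hsub) (hmuL v).le)]
  have hsecle : ∀ x v : ℝ, μ₀ {s : ℝ | Tr s ≤ v ∧ x < s}
      = μ₁ (Iic v) - min (μ₁ (Iic v)) (μ₀ (Iic x)) := by
    intro x v
    have hsplit : μ₀ (Tr ⁻¹' (Iic v) ∩ Iic x) + μ₀ (Tr ⁻¹' (Iic v) \ Iic x)
        = μ₀ (Tr ⁻¹' (Iic v)) := measure_inter_add_diff _ measurableSet_Iic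
    have hset : {s : ℝ | Tr s ≤ v ∧ x < s} = Tr ⁻¹' (Iic v) \ Iic x := by
      ext s
      simp only [mem_setOf_eq, mem_diff, mem_preimage, mem_Iic, not_le]
    rw [hset]
    rw [hminIic v x, hmuA v] at hsplit
    refine ENNReal.eq_sub_of_add_eq ?_ ?_
    · exact ne_top_of_le_ne_top (measure_ne_top μ₁ _) (min_le_left _ _)
    · rw [add_comm]; exact hsplit
  have hsecge : ∀ x v : ℝ, μ₀ {s : ℝ | s ≤ v ∧ x < Tr s}
      = μ₀ (Iic v) - min (μ₀ (Iic v)) (μ₁ (Iic x)) := by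
    intro x v
    have hsplit : μ₀ (Iic v ∩ Tr ⁻¹' (Iic x)) + μ₀ (Iic v \ Tr ⁻¹' (Iic x))
        = μ₀ (Iic v) := measure_inter_add_diff _ (hTrm measurableSet_Iic)
    have hset : {s : ℝ | s ≤ v ∧ x < Tr s} = Iic v \ Tr ⁻¹' (Iic x) := by
      ext s
      simp only [mem_setOf_eq, mem_diff, mem_preimage, mem_Iic, not_le]
    have hint : μ₀ (Iic v ∩ Tr ⁻¹' (Iic x)) = min (μ₀ (Iic v)) (μ₁ (Iic x)) := by
      rw [inter_comm, hminIic x v, min_comm]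
    rw [hset]
    rw [hint] at hsplit
    refine ENNReal.eq_sub_of_add_eq ?_ ?_
    · exact ne_top_of_le_ne_top (measure_ne_top μ₀ _) (min_le_left _ _)
    · rw [add_comm]; exact hsplit
  -- lower bounds for an arbitrary coupling
  have hπlow1 : ∀ x u : ℝ, μ₁ (Iic (x - u)) - min (μ₁ (Iic (x - u))) (μ₀ (Iic x))
      ≤ π {p : ℝ × ℝ | p.2 ≤ x - u ∧ x < p.1} := by
    intro x u
    have hBmeas : MeasurableSet {p : ℝ × ℝ | p.1 ≤ x} :=
      measurableSet_le measurable_fst measurable_const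
    have hsplit : π ({p : ℝ × ℝ | p.2 ≤ x - u} ∩ {p : ℝ × ℝ | p.1 ≤ x})
        + π ({p : ℝ × ℝ | p.2 ≤ x - u} \ {p : ℝ × ℝ | p.1 ≤ x})
        = π {p : ℝ × ℝ | p.2 ≤ x - u} := measure_inter_add_diff _ hBmeas
    have ha : π {p : ℝ × ℝ | p.2 ≤ x - u} = μ₁ (Iic (x - u)) := by
      have h1 : (π.map Prod.snd) (Iic (x - u)) = π (Prod.snd ⁻¹' (Iic (x - u))) :=
        Measure.map_apply measurable_snd measurableSet_Iic
      rw [hπ2] at h1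
      exact h1.symm
    have hb : π {p : ℝ × ℝ | p.1 ≤ x} = μ₀ (Iic x) := by
      have h1 : (π.map Prod.fst) (Iic x) = π (Prod.fst ⁻¹' (Iic x)) :=
        Measure.map_apply measurable_fst measurableSet_Iic
      rw [hπ1] at h1
      exact h1.symm
    have hminle : π ({p : ℝ × ℝ | p.2 ≤ x - u} ∩ {p : ℝ × ℝ | p.1 ≤ x})
        ≤ min (μ₁ (Iic (x - u))) (μ₀ (Iic x)) := by
      refine le_min ?_ ?_
      · rw [← ha]; exact measure_mono inter_subset_left
      · rw [← hb]; exact measure_mono inter_subset_right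
    have hset : {p : ℝ × ℝ | p.2 ≤ x - u ∧ x < p.1}
        = {p : ℝ × ℝ | p.2 ≤ x - u} \ {p : ℝ × ℝ | p.1 ≤ x} := by
      ext p
      simp only [mem_setOf_eq, mem_diff, not_le]
    rw [hset]
    calc μ₁ (Iic (x - u)) - min (μ₁ (Iic (x - u))) (μ₀ (Iic x))
        = π {p : ℝ × ℝ | p.2 ≤ x - u} - min (μ₁ (Iic (x - u))) (μ₀ (Iic x)) := by rw [ha]
      _
        ≤ π {p : ℝ × ℝ | p.2 ≤ x - u}
          - π ({p : ℝ × ℝ | p.2 ≤ x - u} ∩ {p : ℝ × ℝ | p.1 ≤ x}) :=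
          tsub_le_tsub_left hminle _
      _ ≤ π ({p : ℝ × ℝ | p.2 ≤ x - u} \ {p : ℝ × ℝ | p.1 ≤ x}) := by
          rw [← hsplit]
          rw [ENNReal.add_sub_cancel_left (measure_ne_top π _)]
  have hπlow2 : ∀ x u : ℝ, μ₀ (Iic (x - u)) - min (μ₀ (Iic (x - u))) (μ₁ (Iic x))
      ≤ π {p : ℝ × ℝ | p.1 ≤ x - u ∧ x < p.2} := by
    intro x u
    have hBmeas : MeasurableSet {p : ℝ × ℝ | p.2 ≤ x} :=
      measurableSet_le measurable_snd measurable_const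
    have hsplit : π ({p : ℝ × ℝ | p.1 ≤ x - u} ∩ {p : ℝ × ℝ | p.2 ≤ x})
        + π ({p : ℝ × ℝ | p.1 ≤ x - u} \ {p : ℝ × ℝ | p.2 ≤ x})
        = π {p : ℝ × ℝ | p.1 ≤ x - u} := measure_inter_add_diff _ hBmeas
    have ha : π {p : ℝ × ℝ | p.1 ≤ x - u} = μ₀ (Iic (x - u)) := by
      have h1 : (π.map Prod.fst) (Iic (x - u)) = π (Prod.fst ⁻¹' (Iic (x - u))) :=
        Measure.map_apply measurable_fst measurableSet_Iic
      rw [hπ1] at h1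
      exact h1.symm
    have hb : π {p : ℝ × ℝ | p.2 ≤ x} = μ₁ (Iic x) := by
      have h1 : (π.map Prod.snd) (Iic x) = π (Prod.snd ⁻¹' (Iic x)) :=
        Measure.map_apply measurable_snd measurableSet_Iic
      rw [hπ2] at h1
      exact h1.symm
    have hminle : π ({p : ℝ × ℝ | p.1 ≤ x - u} ∩ {p : ℝ × ℝ | p.2 ≤ x})
        ≤ min (μ₀ (Iic (x - u))) (μ₁ (Iic x)) := by
      refine le_min ?_ ?_
      · rw [← ha]; exact measure_mono inter_subset_left
      · rw [← hb]; exact measure_mono inter_subset_right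
    have hset : {p : ℝ × ℝ | p.1 ≤ x - u ∧ x < p.2}
        = {p : ℝ × ℝ | p.1 ≤ x - u} \ {p : ℝ × ℝ | p.2 ≤ x} := by
      ext p
      simp only [mem_setOf_eq, mem_diff, not_le]
    rw [hset]
    calc μ₀ (Iic (x - u)) - min (μ₀ (Iic (x - u))) (μ₁ (Iic x))
        = π {p : ℝ × ℝ | p.1 ≤ x - u} - min (μ₀ (Iic (x - u))) (μ₁ (Iic x)) := by rw [ha]
      _
        ≤ π {p : ℝ × ℝ | p.1 ≤ x - u}
          - π ({p : ℝ × ℝ | p.1 ≤ x - u} ∩ {p : ℝ × ℝ | p.2 ≤ x}) :=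
          tsub_le_tsub_left hminle _
      _ ≤ π ({p : ℝ × ℝ | p.1 ≤ x - u} \ {p : ℝ × ℝ | p.2 ≤ x}) := by
          rw [← hsplit]
          rw [ENNReal.add_sub_cancel_left (measure_ne_top π _)]
  -- key inequalities for the basic costs
  have KEYa : ∀ u : ℝ, ∫⁻ p, ENNReal.ofReal (p.1 - p.2 - u) ∂π₀
      ≤ ∫⁻ p, ENNReal.ofReal (p.1 - p.2 - u) ∂π := by
    intro u
    rw [cost_layer π₀ u, cost_layer π u]
    refine lintegral_mono fun x => ?_
    have hsecmeas : MeasurableSet {p : ℝ × ℝ | p.2 ≤ x - u ∧ x < p.1} :=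
      (measurableSet_le measurable_snd measurable_const).inter
        (measurableSet_lt measurable_const measurable_fst)
    have h1 : π₀ {p : ℝ × ℝ | p.2 ≤ x - u ∧ x < p.1}
        = μ₀ {s : ℝ | Tr s ≤ x - u ∧ x < s} := by
      rw [hπ₀def, Measure.map_apply hgm hsecmeas]
      rfl
    rw [h1, hsecle x (x - u)]
    exact hπlow1 x u
  have KEYb : ∀ u : ℝ, ∫⁻ p, ENNReal.ofReal (p.2 - p.1 - u) ∂π₀
      ≤ ∫⁻ p, ENNReal.ofReal (p.2 - p.1 - u) ∂π := by
    intro u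
    have hcostm : Measurable (fun p : ℝ × ℝ => ENNReal.ofReal (p.1 - p.2 - u)) :=
      ENNReal.measurable_ofReal.comp ((measurable_fst.sub measurable_snd).sub measurable_const)
    have hswap : ∀ ρ : Measure (ℝ × ℝ), ∫⁻ p, ENNReal.ofReal (p.2 - p.1 - u) ∂ρ
        = ∫⁻ p, ENNReal.ofReal (p.1 - p.2 - u) ∂(ρ.map Prod.swap) := by
      intro ρ
      rw [lintegral_map hcostm measurable_swap]
      rfl
    haveI h1 : IsProbabilityMeasure (π₀.map Prod.swap) :=
      Measure.isProbabilityMeasure_map measurable_swap.aemeasurable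
    haveI h2 : IsProbabilityMeasure (π.map Prod.swap) :=
      Measure.isProbabilityMeasure_map measurable_swap.aemeasurable
    rw [hswap π₀, hswap π, cost_layer _ u, cost_layer _ u]
    refine lintegral_mono fun x => ?_
    have hsecmeas : MeasurableSet {p : ℝ × ℝ | p.2 ≤ x - u ∧ x < p.1} :=
      (measurableSet_le measurable_snd measurable_const).inter
        (measurableSet_lt measurable_const measurable_fst)
    have e1 : (π₀.map Prod.swap) {p : ℝ × ℝ | p.2 ≤ x - u ∧ x < p.1}
        = μ₀ {s : ℝ | s ≤ x - u ∧ x < Tr s} := by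
      rw [Measure.map_apply measurable_swap hsecmeas, hπ₀def]
      have : Prod.swap ⁻¹' {p : ℝ × ℝ | p.2 ≤ x - u ∧ x < p.1}
          = {p : ℝ × ℝ | p.1 ≤ x - u ∧ x < p.2} := rfl
      have hm2 : MeasurableSet {p : ℝ × ℝ | p.1 ≤ x - u ∧ x < p.2} :=
        (measurableSet_le measurable_fst measurable_const).inter
          (measurableSet_lt measurable_const measurable_snd)
      rw [this, Measure.map_apply hgm hm2]
      rfl
    have e2 : (π.map Prod.swap) {p : ℝ × ℝ | p.2 ≤ x - u ∧ x < p.1}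
        = π {p : ℝ × ℝ | p.1 ≤ x - u ∧ x < p.2} := by
      rw [Measure.map_apply measurable_swap hsecmeas]
      rfl
    rw [e1, e2, hsecge x (x - u)]
    exact hπlow2 x u
  -- the convex profile function
  set hfun : ℝ → ℝ := fun y => φc (max y 0) - φc 0 with hhdef
  have hfmono : Monotone hfun := by
    intro a b hab
    exact sub_le_sub_right
      (hφmono (le_max_right a 0) (le_max_right b 0) (max_le_max hab le_rfl)) _
  have hfneg : ∀ y : ℝ, y ≤ 0 → hfun y = 0 := fun y hy => by
    simp [hhdef, max_eq_right hy]
  have hfsl : ∀ a b c : ℝ, 0 ≤ a → a < b → b < c →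
      (hfun b - hfun a)/(b-a) ≤ (hfun c - hfun b)/(c-b) := by
    intro a b c ha hab hbc
    have h1 := hφconv.slope_mono_adjacent (ha : a ∈ Ici 0)
      (show c ∈ Ici 0 by simp only [mem_Ici]; linarith) hab hbc
    have e : ∀ y : ℝ, 0 ≤ y → hfun y = φc y - φc 0 := fun y hy => by
      simp [hhdef, max_eq_left hy]
    rw [e a ha, e b (by linarith), e c (by linarith)]
    have e2 : φc b - φc 0 - (φc a - φc 0) = φc b - φc a := by ring
    have e3 : φc c - φc 0 - (φc b - φc 0) = φc c - φc b := by ring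
    rw [e2, e3]
    exact h1
  have hgval : ∀ y : ℝ, φc |y| - φc 0 = hfun |y| := fun y => by
    simp [hhdef, max_eq_left (abs_nonneg y)]
  have hfmeas : Measurable hfun :=
    (Monotone.measurable (fun a b hab =>
      hφmono (le_max_right a 0) (le_max_right b 0) (max_le_max hab le_rfl))).sub
      measurable_const
  have hδpos : ∀ n : ℕ, (0:ℝ) < (1/2)^n := fun n => by positivity
  -- the approximating costs
  set Φ : ℕ → ℝ × ℝ → ENNReal := fun n p =>
    ENNReal.ofReal (Sj hfun ((1/2)^n) (n*2^n) (p.1 - p.2))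
      + ENNReal.ofReal (Sj hfun ((1/2)^n) (n*2^n) (p.2 - p.1)) with hΦdef
  have hΦmeas : ∀ n, Measurable (Φ n) := by
    intro n
    refine Measurable.fun_add ?_ ?_
    · exact ENNReal.measurable_ofReal.comp ((Sj_continuous hfun _ _).measurable.comp
        (measurable_fst.sub measurable_snd))
    · exact ENNReal.measurable_ofReal.comp ((Sj_continuous hfun _ _).measurable.comp
        (measurable_snd.sub measurable_fst))
  have hΦle : ∀ n (p : ℝ × ℝ), Φ n p ≤ ENNReal.ofReal (hfun |p.1 - p.2|) := by
    intro n p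
    rcases le_total (p.1 - p.2) 0 with hx | hx
    · have e1 : Sj hfun ((1/2)^n) (n*2^n) (p.1 - p.2) = 0 := Sj_zero (hδpos n) _ hx
      have habs : |p.1 - p.2| = p.2 - p.1 := by rw [abs_of_nonpos hx]; ring
      have e2 : Sj hfun ((1/2)^n) (n*2^n) (p.2 - p.1) ≤ hfun (p.2 - p.1) :=
        Sj_minor hfmono hfneg hfsl (hδpos n) _ _
      calc Φ n p = ENNReal.ofReal (Sj hfun ((1/2)^n) (n*2^n) (p.2 - p.1)) := by
            rw [hΦdef]; dsimp only; rw [e1, ENNReal.ofReal_zero, zero_add]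
        _ ≤ ENNReal.ofReal (hfun (p.2 - p.1)) := ENNReal.ofReal_le_ofReal e2
        _ = ENNReal.ofReal (hfun |p.1 - p.2|) := by rw [habs]
    · have e1 : Sj hfun ((1/2)^n) (n*2^n) (p.2 - p.1) = 0 :=
        Sj_zero (hδpos n) _ (show p.2 - p.1 ≤ 0 by linarith)
      have habs : |p.1 - p.2| = p.1 - p.2 := abs_of_nonneg hx
      have e2 : Sj hfun ((1/2)^n) (n*2^n) (p.1 - p.2) ≤ hfun (p.1 - p.2) :=
        Sj_minor hfmono hfneg hfsl (hδpos n) _ _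
      calc Φ n p = ENNReal.ofReal (Sj hfun ((1/2)^n) (n*2^n) (p.1 - p.2)) := by
            rw [hΦdef]; dsimp only; rw [e1, ENNReal.ofReal_zero, add_zero]
        _ ≤ ENNReal.ofReal (hfun (p.1 - p.2)) := ENNReal.ofReal_le_ofReal e2
        _ = ENNReal.ofReal (hfun |p.1 - p.2|) := by rw [habs]
  have hΦtend : ∀ p : ℝ × ℝ,
      Tendsto (fun n => Φ n p) atTop (𝓝 (ENNReal.ofReal (hfun |p.1 - p.2|))) := by
    intro p
    rcases le_total (p.1 - p.2) 0 with hx | hx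
    · have habs : |p.1 - p.2| = p.2 - p.1 := by rw [abs_of_nonpos hx]; ring
      have h2 : Tendsto (fun n : ℕ => Sj hfun ((1/2)^n) (n*2^n) (p.2 - p.1)) atTop
          (𝓝 (hfun (p.2 - p.1))) := S_tendsto hfmono hfneg hfsl (by linarith)
      have h3 : Tendsto (fun n : ℕ => ENNReal.ofReal (Sj hfun ((1/2)^n) (n*2^n) (p.2 - p.1)))
          atTop (𝓝 (ENNReal.ofReal (hfun (p.2 - p.1)))) :=
        (ENNReal.continuous_ofReal.tendsto _).comp h2
      rw [habs]
      refine Tendsto.congr (fun n => ?_) h3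
      rw [hΦdef]
      dsimp only
      rw [Sj_zero (hδpos n) _ hx, ENNReal.ofReal_zero, zero_add]
    · have habs : |p.1 - p.2| = p.1 - p.2 := abs_of_nonneg hx
      have h2 : Tendsto (fun n : ℕ => Sj hfun ((1/2)^n) (n*2^n) (p.1 - p.2)) atTop
          (𝓝 (hfun (p.1 - p.2))) := S_tendsto hfmono hfneg hfsl hx
      have h3 : Tendsto (fun n : ℕ => ENNReal.ofReal (Sj hfun ((1/2)^n) (n*2^n) (p.1 - p.2)))
          atTop (𝓝 (ENNReal.ofReal (hfun (p.1 - p.2)))) :=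
        (ENNReal.continuous_ofReal.tendsto _).comp h2
      rw [habs]
      refine Tendsto.congr (fun n => ?_) h3
      rw [hΦdef]
      dsimp only
      rw [Sj_zero (hδpos n) _ (show p.2 - p.1 ≤ 0 by linarith), ENNReal.ofReal_zero, add_zero]
  have hcm : ∀ u : ℝ, Measurable (fun p : ℝ × ℝ => ENNReal.ofReal (p.1 - p.2 - u)) :=
    fun u => ENNReal.measurable_ofReal.comp
      ((measurable_fst.sub measurable_snd).sub measurable_const)
  have hcm' : ∀ u : ℝ, Measurable (fun p : ℝ × ℝ => ENNReal.ofReal (p.2 - p.1 - u)) :=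
    fun u => ENNReal.measurable_ofReal.comp
      ((measurable_snd.sub measurable_fst).sub measurable_const)
  have hΦint : ∀ n, ∫⁻ p, Φ n p ∂π₀ ≤ ∫⁻ p, Φ n p ∂π := by
    intro n
    have hΦeq : ∀ p : ℝ × ℝ, Φ n p
        = (ENNReal.ofReal (Dr hfun 0) * (ENNReal.ofReal (p.1 - p.2 - 0)
            + ENNReal.ofReal (p.2 - p.1 - 0)))
          + ∑ k ∈ Finset.range (n*2^n),
            (ENNReal.ofReal (Dr hfun (((k:ℝ)+1)*(1/2)^n) - Dr hfun ((k:ℝ)*(1/2)^n))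
              * (ENNReal.ofReal (p.1 - p.2 - ((k:ℝ)+1)*(1/2)^n)
                + ENNReal.ofReal (p.2 - p.1 - ((k:ℝ)+1)*(1/2)^n))) := by
      intro p
      rw [hΦdef]
      dsimp only
      rw [ofReal_Sj hfmono hfneg hfsl (hδpos n) (n*2^n) (p.1 - p.2),
        ofReal_Sj hfmono hfneg hfsl (hδpos n) (n*2^n) (p.2 - p.1)]
      rw [show ∀ a b c d : ENNReal, (a + b) + (c + d) = (a + c) + (b + d) from
        fun a b c d => by ring]
      congr 1
      · rw [mul_add]
      · rw [← Finset.sum_add_distrib]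
        exact Finset.sum_congr rfl fun k _ => (mul_add _ _ _).symm
    have hint : ∀ ρ : Measure (ℝ × ℝ), ∫⁻ p, Φ n p ∂ρ
        = (ENNReal.ofReal (Dr hfun 0) * ((∫⁻ p, ENNReal.ofReal (p.1 - p.2 - 0) ∂ρ)
            + ∫⁻ p, ENNReal.ofReal (p.2 - p.1 - 0) ∂ρ))
          + ∑ k ∈ Finset.range (n*2^n),
            (ENNReal.ofReal (Dr hfun (((k:ℝ)+1)*(1/2)^n) - Dr hfun ((k:ℝ)*(1/2)^n))
              * ((∫⁻ p, ENNReal.ofReal (p.1 - p.2 - ((k:ℝ)+1)*(1/2)^n) ∂ρ)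
                + ∫⁻ p, ENNReal.ofReal (p.2 - p.1 - ((k:ℝ)+1)*(1/2)^n) ∂ρ)) := by
      intro ρ
      rw [lintegral_congr hΦeq]
      rw [lintegral_add_left (measurable_const.fun_mul ((hcm 0).fun_add (hcm' 0)))]
      congr 1
      · rw [lintegral_const_mul _ ((hcm 0).fun_add (hcm' 0)),
          lintegral_add_left (hcm 0)]
      · rw [lintegral_finset_sum _ fun k _ => measurable_const.fun_mul ((hcm _).fun_add (hcm' _))]
        refine Finset.sum_congr rfl fun k _ => ?_
        rw [lintegral_const_mul _ ((hcm _).fun_add (hcm' _)), lintegral_add_left (hcm _)]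
    rw [hint π₀, hint π]
    refine add_le_add (mul_le_mul_right (add_le_add (KEYa 0) (KEYb 0)) _)
      (Finset.sum_le_sum fun k _ =>
        mul_le_mul_right (add_le_add (KEYa _) (KEYb _)) _)
  have hfabs_meas : Measurable (fun p : ℝ × ℝ => ENNReal.ofReal (hfun |p.1 - p.2|)) :=
    ENNReal.measurable_ofReal.comp (hfmeas.comp
      (continuous_abs.measurable.comp (measurable_fst.sub measurable_snd)))
  calc ∫⁻ s, ENNReal.ofReal (φc |s - (T s).toReal| - φc 0) ∂μ₀
      = ∫⁻ s, ENNReal.ofReal (hfun |s - Tr s|) ∂μ₀ := lintegral_congr fun s => by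
        rw [hgval]
    _ = ∫⁻ p, ENNReal.ofReal (hfun |p.1 - p.2|) ∂π₀ :=
        (lintegral_map hfabs_meas hgm).symm
    _ = ∫⁻ p, liminf (fun n => Φ n p) atTop ∂π₀ :=
        lintegral_congr fun p => ((hΦtend p).liminf_eq).symm
    _ ≤ liminf (fun n => ∫⁻ p, Φ n p ∂π₀) atTop := lintegral_liminf_le hΦmeas
    _ ≤ liminf (fun n => ∫⁻ p, Φ n p ∂π) atTop :=
        liminf_le_liminf (Filter.Eventually.of_forall hΦint)
    _ ≤ liminf (fun n : ℕ => ∫⁻ p, ENNReal.ofReal (hfun |p.1 - p.2|) ∂π) atTop :=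
        liminf_le_liminf (Filter.Eventually.of_forall fun n =>
          lintegral_mono fun p => hΦle n p)
    _ = ∫⁻ p, ENNReal.ofReal (hfun |p.1 - p.2|) ∂π := liminf_const _
    _ = ∫⁻ p, ENNReal.ofReal (φc |p.1 - p.2| - φc 0) ∂π := lintegral_congr fun p => by
        rw [← hgval]
end
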